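/- arXiv:2002.01189 — 5 statements merged into one kernel-verified Lean document; each statement's English description precedes it below -/
import Mathlib

section
/- Let X be a compact metric space, c : X×X → [0,∞) continuous, and μ, ν probability measures on X. Then the entropic regularized optimal transport problem OT_ε(μ,ν) = inf_{π ∈ Π(μ,ν)} { ∫ c dπ + ε KL(π, μ⊗ν) } admits a unique minimizer, and the minimum value is finite. -/
open MeasureTheory Filter Topology
open scoped ENNReal NNReal Classical

/-- The Kullback-Leibler divergence (with value `+∞` if `μ` is not absolutely continuous
with respect to `ν`), written via the nonnegative integrand `x log x - x + 1`. -/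
noncomputable def KL {X : Type*} [MeasurableSpace X] (μ ν : Measure X) : ℝ≥0∞ :=
  if μ ≪ ν then
    ∫⁻ x, ENNReal.ofReal
      ((μ.rnDeriv ν x).toReal * Real.log (μ.rnDeriv ν x).toReal
        - (μ.rnDeriv ν x).toReal + 1) ∂ν
  else ∞

/-- `π ∈ Π(μ,ν)`: `π` is a measure on `X × X` with marginals `μ` and `ν`. -/
def IsCoupling {X : Type*} [MeasurableSpace X] (π : Measure (X × X)) (μ ν : Measure X) : Prop :=
  π.map Prod.fst = μ ∧ π.map Prod.snd = ν

/-- The entropic regularized transport functional `π ↦ ∫ c dπ + ε KL(π, μ⊗ν)`. -/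
noncomputable def regOTFunctional {X : Type*} [MeasurableSpace X]
    (c : X → X → ℝ) (ε : ℝ) (μ ν : Measure X) (π : Measure (X × X)) : ℝ≥0∞ :=
  (∫⁻ p, ENNReal.ofReal (c p.1 p.2) ∂π) + ENNReal.ofReal ε * KL π (μ.prod ν)



/-- entropy integrand -/
noncomputable def entf (x : ℝ) : ℝ := x * Real.log x - x + 1

lemma entf_nonneg {x : ℝ} (hx : 0 ≤ x) : 0 ≤ entf x := by
  rcases eq_or_lt_of_le hx with h | h
  · simp [entf, ← h]
  · have h1 : Real.log x⁻¹ ≤ x⁻¹ - 1 := Real.log_le_sub_one_of_pos (by positivity)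
    rw [Real.log_inv] at h1
    have : 1 - x⁻¹ ≤ Real.log x := by linarith
    have h2 : x * (1 - x⁻¹) ≤ x * Real.log x := by
      exact mul_le_mul_of_nonneg_left this hx
    have hxi : x * x⁻¹ = 1 := mul_inv_cancel₀ h.ne'
    unfold entf; nlinarith

lemma entf_sqrt {x : ℝ} (hx : 0 ≤ x) : (Real.sqrt x - 1) ^ 2 ≤ entf x := by
  rcases eq_or_lt_of_le hx with h | h
  · simp [entf, ← h]
  · set t := Real.sqrt x with ht
    have ht0 : 0 < t := Real.sqrt_pos.2 h
    have htsq : t ^ 2 = x := Real.sq_sqrt hx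
    have hlog : Real.log x = 2 * Real.log t := by
      rw [← htsq, sq, Real.log_mul ht0.ne' ht0.ne']; ring
    have hent : 0 ≤ entf t := entf_nonneg ht0.le
    have : entf x - (t - 1) ^ 2 = 2 * t * entf t := by
      unfold entf; rw [hlog, ← htsq]; ring
    nlinarith

/-- relative entropy building block: `a (log a - log h) - a + h ≥ (√a - √h)²` for `h > 0`. -/
lemma entf_rel {a h : ℝ} (ha : 0 ≤ a) (hh : 0 < h) :
    (Real.sqrt a - Real.sqrt h) ^ 2 ≤ a * (Real.log a - Real.log h) - a + h := by
  rcases eq_or_lt_of_le ha with h0 | h0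
  · simp [← h0, Real.sq_sqrt hh.le]
  · have key : (Real.sqrt (a / h) - 1) ^ 2 ≤ entf (a / h) := entf_sqrt (by positivity)
    have hlog : Real.log (a / h) = Real.log a - Real.log h := Real.log_div h0.ne' hh.ne'
    have hsq : Real.sqrt (a / h) = Real.sqrt a / Real.sqrt h := Real.sqrt_div h0.le h
    have hsh : Real.sqrt h ^ 2 = h := Real.sq_sqrt hh.le
    have hsa : Real.sqrt a ^ 2 = a := Real.sq_sqrt ha
    have hshpos : 0 < Real.sqrt h := Real.sqrt_pos.2 hh
    have hmul := mul_le_mul_of_nonneg_left key hh.le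
    have expand : h * entf (a / h) = a * (Real.log a - Real.log h) - a + h := by
      unfold entf; rw [hlog]; field_simp
    have expand2 : h * (Real.sqrt (a / h) - 1) ^ 2 = (Real.sqrt a - Real.sqrt h) ^ 2 := by
      rw [hsq]; field_simp; rw [hsh]
    linarith [expand ▸ expand2 ▸ hmul]

/-- midpoint convexity gap for the entropy integrand. -/
lemma entf_midpoint {a b : ℝ} (ha : 0 ≤ a) (hb : 0 ≤ b) :
    2 * entf ((a + b) / 2) + (Real.sqrt a - Real.sqrt b) ^ 2 / 2 ≤ entf a + entf b := by
  set h := (a + b) / 2 with hh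
  rcases eq_or_lt_of_le (by positivity : (0:ℝ) ≤ h) with h0 | h0
  · have ha0 : a = 0 := by simp [hh] at h0; linarith
    have hb0 : b = 0 := by simp [hh] at h0; linarith
    have : h = 0 := h0.symm
    simp [ha0, hb0, this, entf]
    norm_num
  · have k1 : (Real.sqrt a - Real.sqrt h) ^ 2 ≤ a * (Real.log a - Real.log h) - a + h :=
      entf_rel ha h0
    have k2 : (Real.sqrt b - Real.sqrt h) ^ 2 ≤ b * (Real.log b - Real.log h) - b + h :=
      entf_rel hb h0
    have ident : entf a + entf b - 2 * entf h
        = (a * (Real.log a - Real.log h) - a + h) + (b * (Real.log b - Real.log h) - b + h) := by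
      unfold entf; rw [hh]; ring
    nlinarith [k1, k2, sq_nonneg (Real.sqrt a + Real.sqrt b - 2 * Real.sqrt h)]
section MT
open ENNReal
variable {Y : Type*} [MeasurableSpace Y]

lemma continuous_entf : Continuous entf := by
  unfold entf; exact (Real.continuous_mul_log.sub continuous_id).add continuous_const

/-- the real-valued density of `P` w.r.t. `m`. -/
noncomputable def dens (P m : Measure Y) : Y → ℝ := fun y => (P.rnDeriv m y).toReal

lemma dens_nonneg (P m : Measure Y) (y : Y) : 0 ≤ dens P m y := ENNReal.toReal_nonneg

lemma measurable_dens (P m : Measure Y) : Measurable (dens P m) :=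
  (Measure.measurable_rnDeriv _ _).ennreal_toReal

lemma KL_eq {P m : Measure Y} (h : P ≪ m) :
    KL P m = ∫⁻ y, ENNReal.ofReal (entf (dens P m y)) ∂m := by
  simp only [KL, if_pos h, entf, dens]

lemma KL_of_not_ac {P m : Measure Y} (h : ¬ P ≪ m) : KL P m = ∞ := by
  simp only [KL, if_neg h]

lemma rnDeriv_eq_ofReal_dens (P m : Measure Y) [SigmaFinite P] :
    P.rnDeriv m =ᵐ[m] fun y => ENNReal.ofReal (dens P m y) := by
  filter_upwards [Measure.rnDeriv_lt_top P m] with y hy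
  simp [dens, ENNReal.ofReal_toReal hy.ne]

lemma eq_withDensity_dens {P m : Measure Y} [SigmaFinite P] [SigmaFinite m] (h : P ≪ m) :
    P = m.withDensity (fun y => ENNReal.ofReal (dens P m y)) :=
  ((Measure.withDensity_rnDeriv_eq _ _ h).symm).trans
    (withDensity_congr_ae (rnDeriv_eq_ofReal_dens P m))

lemma setLIntegral_dens {P m : Measure Y} [SigmaFinite P] [SigmaFinite m] (h : P ≪ m)
    {A : Set Y} (hA : MeasurableSet A) :
    ∫⁻ y in A, ENNReal.ofReal (dens P m y) ∂m = P A := by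
  conv_rhs => rw [eq_withDensity_dens h]
  rw [withDensity_apply _ hA]

lemma lintegral_ofReal_dens {P m : Measure Y} [SigmaFinite P] [SigmaFinite m] (h : P ≪ m) :
    ∫⁻ y, ENNReal.ofReal (dens P m y) ∂m = P Set.univ := by
  rw [← setLIntegral_dens h MeasurableSet.univ]; simp

lemma lintegral_eq_dens_mul {P m : Measure Y} [SigmaFinite P] [SigmaFinite m] (h : P ≪ m)
    {g : Y → ℝ≥0∞} (hg : Measurable g) :
    ∫⁻ y, g y ∂P = ∫⁻ y, ENNReal.ofReal (dens P m y) * g y ∂m := by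
  conv_lhs => rw [eq_withDensity_dens h]
  rw [lintegral_withDensity_eq_lintegral_mul _ ((measurable_dens P m).ennreal_ofReal) hg]
  rfl

end MT

section Gap
open ENNReal
variable {Y : Type*} [MeasurableSpace Y]

/-- squared Hellinger-type distance between densities. -/
noncomputable def Hell (P Q m : Measure Y) : ℝ≥0∞ :=
  ∫⁻ y, ENNReal.ofReal ((Real.sqrt (dens P m y) - Real.sqrt (dens Q m y)) ^ 2) ∂m

lemma measurable_hell_integrand (P Q m : Measure Y) :
    Measurable fun y => ENNReal.ofReal ((Real.sqrt (dens P m y) - Real.sqrt (dens Q m y)) ^ 2) :=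
  (((Real.continuous_sqrt.measurable.comp (measurable_dens P m)).sub
    (Real.continuous_sqrt.measurable.comp (measurable_dens Q m))).pow_const 2).ennreal_ofReal

lemma measurable_entf_dens (P m : Measure Y) :
    Measurable fun y => ENNReal.ofReal (entf (dens P m y)) :=
  ((continuous_entf.measurable).comp (measurable_dens P m)).ennreal_ofReal

/-- the density of the midpoint measure is the midpoint of densities, a.e. -/
lemma dens_midpoint (P Q m : Measure Y) [IsFiniteMeasure P] [IsFiniteMeasure Q] [SigmaFinite m] :
    dens ((2⁻¹ : ℝ≥0∞) • (P + Q)) m =ᵐ[m] fun y => (dens P m y + dens Q m y) / 2 := by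
  have h1 := Measure.rnDeriv_smul_left_of_ne_top (P + Q) m (r := (2⁻¹ : ℝ≥0∞)) (by simp)
  have h2 := Measure.rnDeriv_add P Q m
  have h3 := Measure.rnDeriv_lt_top P m
  have h4 := Measure.rnDeriv_lt_top Q m
  filter_upwards [h1, h2, h3, h4] with y hy1 hy2 hy3 hy4
  simp only [dens, hy1, Pi.smul_apply, hy2, Pi.add_apply, smul_eq_mul]
  rw [ENNReal.toReal_mul, ENNReal.toReal_add hy3.ne hy4.ne]
  simp [ENNReal.toReal_inv]
  ring

/-- the key strong-convexity gap inequality for `KL`. -/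
lemma KL_gap (P Q m : Measure Y) [IsProbabilityMeasure P] [IsProbabilityMeasure Q]
    [IsProbabilityMeasure m] (hP : P ≪ m) (hQ : Q ≪ m) :
    2 * KL ((2⁻¹ : ℝ≥0∞) • (P + Q)) m + 2⁻¹ * Hell P Q m ≤ KL P m + KL Q m := by
  set R := (2⁻¹ : ℝ≥0∞) • (P + Q) with hR
  have hRac : R ≪ m := by
    rw [hR]
    intro s hs
    simp [Measure.smul_apply, Measure.coe_add, Pi.add_apply, hP hs, hQ hs]
  rw [KL_eq hP, KL_eq hQ, KL_eq hRac]
  have key : ∀ᵐ y ∂m,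
      2 * ENNReal.ofReal (entf (dens R m y)) + 2⁻¹ *
        ENNReal.ofReal ((Real.sqrt (dens P m y) - Real.sqrt (dens Q m y)) ^ 2)
      ≤ ENNReal.ofReal (entf (dens P m y)) + ENNReal.ofReal (entf (dens Q m y)) := by
    filter_upwards [dens_midpoint P Q m] with y hy
    have ha := dens_nonneg P m y
    have hb := dens_nonneg Q m y
    have hmid := entf_midpoint ha hb
    have hent : 0 ≤ entf ((dens P m y + dens Q m y) / 2) :=
      entf_nonneg (by positivity)
    rw [hy]
    calc 2 * ENNReal.ofReal (entf ((dens P m y + dens Q m y) / 2)) + 2⁻¹ *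
          ENNReal.ofReal ((Real.sqrt (dens P m y) - Real.sqrt (dens Q m y)) ^ 2)
        = ENNReal.ofReal (2 * entf ((dens P m y + dens Q m y) / 2)
            + (Real.sqrt (dens P m y) - Real.sqrt (dens Q m y)) ^ 2 / 2) := by
          rw [ENNReal.ofReal_add (by linarith) (by positivity),
            ENNReal.ofReal_mul (by norm_num), ENNReal.ofReal_ofNat]
          · congr 1
            rw [div_eq_inv_mul, ENNReal.ofReal_mul (by norm_num)]
            congr 1
            rw [← ENNReal.ofReal_ofNat 2, ← ENNReal.ofReal_inv_of_pos two_pos]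
      _ ≤ ENNReal.ofReal (entf (dens P m y) + entf (dens Q m y)) :=
          ENNReal.ofReal_le_ofReal hmid
      _ = _ := ENNReal.ofReal_add (entf_nonneg ha) (entf_nonneg hb)
  calc 2 * (∫⁻ y, ENNReal.ofReal (entf (dens R m y)) ∂m) + 2⁻¹ * Hell P Q m
      = ∫⁻ y, (2 * ENNReal.ofReal (entf (dens R m y)) + 2⁻¹ *
          ENNReal.ofReal ((Real.sqrt (dens P m y) - Real.sqrt (dens Q m y)) ^ 2)) ∂m := by
        rw [lintegral_add_left ((measurable_entf_dens R m).const_mul 2),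
          lintegral_const_mul _ (measurable_entf_dens R m),
          lintegral_const_mul _ (measurable_hell_integrand P Q m)]
        rfl
    _ ≤ ∫⁻ y, (ENNReal.ofReal (entf (dens P m y)) + ENNReal.ofReal (entf (dens Q m y))) ∂m :=
        lintegral_mono_ae key
    _ = _ := lintegral_add_left (measurable_entf_dens P m) _

end Gap

section Helpers
open ENNReal
variable {Y : Type*} [MeasurableSpace Y]

/-- L¹ distance of two densities is controlled by the Hellinger-type quantity. -/
lemma l1_le_sqrt_hell {m : Measure Y} [IsProbabilityMeasure m] {a b : Y → ℝ}
    (ha : Measurable a) (hb : Measurable b) (ha0 : ∀ y, 0 ≤ a y) (hb0 : ∀ y, 0 ≤ b y)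
    (hai : ∫⁻ y, ENNReal.ofReal (a y) ∂m ≤ 1) (hbi : ∫⁻ y, ENNReal.ofReal (b y) ∂m ≤ 1) :
    ∫⁻ y, ENNReal.ofReal (|a y - b y|) ∂m
      ≤ 2 * (∫⁻ y, ENNReal.ofReal ((Real.sqrt (a y) - Real.sqrt (b y)) ^ 2) ∂m) ^ (1/2 : ℝ) := by
  set f : Y → ℝ≥0∞ := fun y => ENNReal.ofReal (|Real.sqrt (a y) - Real.sqrt (b y)|)
  set g : Y → ℝ≥0∞ := fun y => ENNReal.ofReal (Real.sqrt (a y) + Real.sqrt (b y))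
  have hfm : Measurable f := (((Real.continuous_sqrt.measurable.comp ha).sub
      (Real.continuous_sqrt.measurable.comp hb)).abs).ennreal_ofReal
  have hgm : Measurable g := (((Real.continuous_sqrt.measurable.comp ha).add
      (Real.continuous_sqrt.measurable.comp hb))).ennreal_ofReal
  have hconj : Real.HolderConjugate 2 2 := Real.HolderConjugate.two_two
  have CS := ENNReal.lintegral_mul_le_Lp_mul_Lq m hconj hfm.aemeasurable hgm.aemeasurable
  have hpt : ∀ y, ENNReal.ofReal (|a y - b y|) = (f * g) y := by
    intro y
    have h1 : |a y - b y| = |Real.sqrt (a y) - Real.sqrt (b y)|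
        * (Real.sqrt (a y) + Real.sqrt (b y)) := by
      rw [← abs_of_nonneg (by positivity : (0:ℝ) ≤ Real.sqrt (a y) + Real.sqrt (b y)),
        ← abs_mul]
      congr 1
      have := Real.sq_sqrt (ha0 y); have := Real.sq_sqrt (hb0 y)
      nlinarith [Real.sq_sqrt (ha0 y), Real.sq_sqrt (hb0 y)]
    rw [h1, ENNReal.ofReal_mul (abs_nonneg _)]
    rfl
  have hf2 : ∀ y, f y ^ (2:ℝ) = ENNReal.ofReal ((Real.sqrt (a y) - Real.sqrt (b y)) ^ 2) := by
    intro y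
    rw [show ((2:ℝ)) = ((2:ℕ):ℝ) by norm_num, ENNReal.rpow_natCast,
      ← ENNReal.ofReal_pow (abs_nonneg _), sq_abs]
  have hg2 : ∫⁻ y, g y ^ (2:ℝ) ∂m ≤ 4 := by
    have hpt2 : ∀ y, g y ^ (2:ℝ) ≤ ENNReal.ofReal (2 * a y + 2 * b y) := by
      intro y
      have e1 : g y ^ (2:ℝ) = ENNReal.ofReal ((Real.sqrt (a y) + Real.sqrt (b y)) ^ 2) := by
        rw [show ((2:ℝ)) = ((2:ℕ):ℝ) by norm_num, ENNReal.rpow_natCast,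
          ← ENNReal.ofReal_pow (by positivity)]
      rw [e1]
      apply ENNReal.ofReal_le_ofReal
      nlinarith [Real.sq_sqrt (ha0 y), Real.sq_sqrt (hb0 y), Real.sqrt_nonneg (a y),
        Real.sqrt_nonneg (b y), sq_nonneg (Real.sqrt (a y) - Real.sqrt (b y))]
    calc ∫⁻ y, g y ^ (2:ℝ) ∂m ≤ ∫⁻ y, ENNReal.ofReal (2 * a y + 2 * b y) ∂m :=
          lintegral_mono hpt2
      _ = ∫⁻ y, (2 * ENNReal.ofReal (a y) + 2 * ENNReal.ofReal (b y)) ∂m := by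
          apply lintegral_congr
          intro y
          rw [ENNReal.ofReal_add (mul_nonneg (by norm_num) (ha0 y)) (mul_nonneg (by norm_num) (hb0 y)),
            ENNReal.ofReal_mul (by norm_num), ENNReal.ofReal_mul (by norm_num),
            ENNReal.ofReal_ofNat]
      _ = 2 * ∫⁻ y, ENNReal.ofReal (a y) ∂m + 2 * ∫⁻ y, ENNReal.ofReal (b y) ∂m := by
          rw [lintegral_add_left ((ha.ennreal_ofReal).const_mul 2),
            lintegral_const_mul _ ha.ennreal_ofReal, lintegral_const_mul _ hb.ennreal_ofReal]
      _ ≤ 2 * 1 + 2 * 1 := by gcongr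
      _ = 4 := by norm_num
  calc ∫⁻ y, ENNReal.ofReal (|a y - b y|) ∂m = ∫⁻ y, (f * g) y ∂m :=
        lintegral_congr hpt
    _ ≤ (∫⁻ y, f y ^ (2:ℝ) ∂m) ^ (1/(2:ℝ)) * (∫⁻ y, g y ^ (2:ℝ) ∂m) ^ (1/(2:ℝ)) := CS
    _ ≤ (∫⁻ y, ENNReal.ofReal ((Real.sqrt (a y) - Real.sqrt (b y)) ^ 2) ∂m) ^ (1/(2:ℝ))
          * 4 ^ (1/(2:ℝ)) := by
        have e2 : ∫⁻ y, f y ^ (2:ℝ) ∂m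
            = ∫⁻ y, ENNReal.ofReal ((Real.sqrt (a y) - Real.sqrt (b y)) ^ 2) ∂m :=
          lintegral_congr hf2
        rw [e2]
        exact mul_le_mul_right (ENNReal.rpow_le_rpow hg2 (by norm_num)) _
    _ = 2 * (∫⁻ y, ENNReal.ofReal ((Real.sqrt (a y) - Real.sqrt (b y)) ^ 2) ∂m) ^ (1/2 : ℝ) := by
        rw [mul_comm]
        congr 1
        rw [show (4:ℝ≥0∞) = 2 ^ (2:ℕ) by norm_num, ← ENNReal.rpow_natCast,
          ← ENNReal.rpow_mul]
        norm_num

lemma eq_of_forall_le_add {x y : ℝ≥0∞} (hx : x ≠ ∞) (hy : y ≠ ∞) (e : ℕ → ℝ≥0∞)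
    (he : Filter.Tendsto e Filter.atTop (nhds 0))
    (h1 : ∀ n, x ≤ y + e n) (h2 : ∀ n, y ≤ x + e n) : x = y := by
  have key : ∀ {u v : ℝ≥0∞}, v ≠ ∞ → (∀ n, u ≤ v + e n) → u ≤ v := by
    intro u v hv h
    have : Filter.Tendsto (fun n => v + e n) Filter.atTop (nhds v) := by
      have := Filter.Tendsto.add (tendsto_const_nhds (x := v) (f := Filter.atTop)) he
      simpa using this
    exact ge_of_tendsto this (Filter.Eventually.of_forall h)
  exact le_antisymm (key hy h1) (key hx h2)

end Helpers

section MainPrep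
open ENNReal
variable {X : Type*} [MeasurableSpace X]

lemma IsCoupling.isProbabilityMeasure {P : Measure (X × X)} {μ ν : Measure X}
    [IsProbabilityMeasure μ] (h : IsCoupling P μ ν) : IsProbabilityMeasure P := by
  constructor
  have h1 := congrArg (fun τ : Measure X => τ Set.univ) h.1
  simpa [Measure.map_apply measurable_fst MeasurableSet.univ] using h1

lemma KL_self (m : Measure X) [SigmaFinite m] : KL m m = 0 := by
  rw [KL_eq Measure.AbsolutelyContinuous.rfl]
  rw [← lintegral_zero (μ := m)]
  apply lintegral_congr_ae
  filter_upwards [Measure.rnDeriv_self m] with y hy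
  simp [dens, hy, entf]

end MainPrep

section Main
open ENNReal
variable {X : Type*} [MetricSpace X] [CompactSpace X] [MeasurableSpace X] [BorelSpace X]
variable (c : X → X → ℝ) (ε : ℝ) (μ ν : Measure X)

lemma regOT_top_of_not_ac (hε : 0 < ε) {P : Measure (X × X)} (h : ¬ P ≪ μ.prod ν) :
    regOTFunctional c ε μ ν P = ∞ := by
  rw [regOTFunctional, KL_of_not_ac h, ENNReal.mul_top (by simpa using hε), add_top]

lemma regOT_eq_density (hc : Continuous fun p : X × X => c p.1 p.2)
    (hc0 : ∀ x y, 0 ≤ c x y) [IsProbabilityMeasure μ] [IsProbabilityMeasure ν]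
    {P : Measure (X × X)} [SigmaFinite P] (hac : P ≪ μ.prod ν) :
    regOTFunctional c ε μ ν P
      = ∫⁻ p, (ENNReal.ofReal (c p.1 p.2 * dens P (μ.prod ν) p)
          + ENNReal.ofReal ε * ENNReal.ofReal (entf (dens P (μ.prod ν) p))) ∂(μ.prod ν) := by
  set m := μ.prod ν
  have h1 : ∫⁻ p, ENNReal.ofReal (c p.1 p.2) ∂P
      = ∫⁻ p, ENNReal.ofReal (c p.1 p.2 * dens P m p) ∂m := by
    rw [lintegral_eq_dens_mul hac hc.measurable.ennreal_ofReal]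
    apply lintegral_congr
    intro p
    rw [mul_comm (c p.1 p.2), ENNReal.ofReal_mul (dens_nonneg P m p)]
  rw [regOTFunctional, KL_eq hac, h1,
    lintegral_add_left (f := fun p => ENNReal.ofReal (c p.1 p.2 * dens P m p)) ((hc.measurable.mul (measurable_dens P m)).ennreal_ofReal),
    lintegral_const_mul _ (measurable_entf_dens P m)]

end Main

/-- For a continuous nonnegative cost on a compact metric space, probability measures `μ, ν`
and `ε > 0`, the problem `OT_ε(μ,ν) = inf_{π ∈ Π(μ,ν)} { ∫ c dπ + ε KL(π, μ⊗ν) }` admits a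
unique minimizer, and its value is finite. -/
theorem regOT_unique_minimizer {X : Type*} [MetricSpace X] [CompactSpace X]
    [MeasurableSpace X] [BorelSpace X]
    (c : X → X → ℝ) (hc : Continuous fun p : X × X => c p.1 p.2)
    (hc0 : ∀ x y, 0 ≤ c x y)
    (μ ν : Measure X) [IsProbabilityMeasure μ] [IsProbabilityMeasure ν]
    (ε : ℝ) (hε : 0 < ε) :
    ∃ π₀ : Measure (X × X), IsCoupling π₀ μ ν ∧
      regOTFunctional c ε μ ν π₀ ≠ ∞ ∧
      (∀ π, IsCoupling π μ ν → regOTFunctional c ε μ ν π₀ ≤ regOTFunctional c ε μ ν π) ∧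
      ∀ π, IsCoupling π μ ν →
        regOTFunctional c ε μ ν π = regOTFunctional c ε μ ν π₀ → π = π₀ := by
  classical
  set m : Measure (X × X) := μ.prod ν with hm
  set F : Measure (X × X) → ℝ≥0∞ := regOTFunctional c ε μ ν with hF
  set I : ℝ≥0∞ := ⨅ (P : Measure (X × X)) (_ : IsCoupling P μ ν), F P with hI
  have he0 : (ENNReal.ofReal ε) ≠ 0 := by simpa using hε
  have hetop : (ENNReal.ofReal ε) ≠ ∞ := ENNReal.ofReal_ne_top
  haveI : IsProbabilityMeasure m := by rw [hm]; infer_instance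
  -- the product coupling
  have hmc : IsCoupling m μ ν := by
    constructor <;> simp [hm, Measure.map_fst_prod, Measure.map_snd_prod]
  -- cost is bounded
  obtain ⟨B, hB⟩ : ∃ B : ℝ, ∀ p : X × X, c p.1 p.2 ≤ B := by
    obtain ⟨B, hB⟩ := (isCompact_univ (X := X × X)).bddAbove_image hc.continuousOn
    exact ⟨B, fun p => hB ⟨p, Set.mem_univ p, rfl⟩⟩
  have hlinB : ∀ P : Measure (X × X), IsProbabilityMeasure P →
      ∫⁻ p, ENNReal.ofReal (c p.1 p.2) ∂P ≤ ENNReal.ofReal B := by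
    intro P hP
    calc ∫⁻ p, ENNReal.ofReal (c p.1 p.2) ∂P ≤ ∫⁻ _, ENNReal.ofReal B ∂P :=
          lintegral_mono fun p => ENNReal.ofReal_le_ofReal (hB p)
      _ = ENNReal.ofReal B := by simp
  have hFm : F m ≤ ENNReal.ofReal B := by
    rw [hF, regOTFunctional, ← hm, KL_self m, mul_zero, add_zero]
    exact hlinB m inferInstance
  have hIle : ∀ P, IsCoupling P μ ν → I ≤ F P := fun P hP => iInf₂_le P hP
  have hItop : I ≠ ∞ :=
    (((hIle m hmc).trans hFm).trans_lt ENNReal.ofReal_lt_top).ne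
  -- minimizing sequence
  have hex : ∀ n : ℕ, ∃ P : Measure (X × X), IsCoupling P μ ν ∧
      F P ≤ I + ENNReal.ofReal ε * (4⁻¹ : ℝ≥0∞) ^ (n + 1) := by
    intro n
    set δ : ℝ≥0∞ := ENNReal.ofReal ε * (4⁻¹ : ℝ≥0∞) ^ (n + 1) with hδ
    have hδ0 : δ ≠ 0 := by
      simp only [hδ, ne_eq, mul_eq_zero, not_or]
      exact ⟨he0, by simp⟩
    by_contra hcon
    push_neg at hcon
    have : I + δ ≤ I := by
      rw [hI]
      exact le_iInf₂ fun P hP => (hcon P hP).le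
    exact absurd this (ENNReal.lt_add_right hItop hδ0).not_ge
  choose ps hps hpsF using hex
  have hprob : ∀ n, IsProbabilityMeasure (ps n) := fun n => (hps n).isProbabilityMeasure
  have hFfin : ∀ n, F (ps n) ≠ ∞ := by
    intro n
    refine ((hpsF n).trans_lt ?_).ne
    exact ENNReal.add_lt_top.2 ⟨hItop.lt_top, ENNReal.mul_lt_top hetop.lt_top (by simp [ENNReal.pow_lt_top, ENNReal.inv_lt_top])⟩
  have hac : ∀ n, ps n ≪ m := by
    intro n
    by_contra h
    exact hFfin n (by rw [hF]; exact regOT_top_of_not_ac c ε μ ν hε h)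
  -- midpoints are couplings
  have hmidc : ∀ P Q : Measure (X × X), IsCoupling P μ ν → IsCoupling Q μ ν →
      IsCoupling ((2⁻¹ : ℝ≥0∞) • (P + Q)) μ ν := by
    intro P Q hP hQ
    have h2 : ∀ κ : Measure X, κ = μ ∨ κ = ν → (2⁻¹ : ℝ≥0∞) • (κ + κ) = κ := by
      intro κ _
      rw [← two_smul ℝ≥0∞ κ, smul_smul, ENNReal.inv_mul_cancel two_ne_zero ENNReal.ofNat_ne_top,
        one_smul]
    constructor
    · rw [Measure.map_smul, Measure.map_add _ _ measurable_fst, hP.1, hQ.1]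
      exact h2 μ (Or.inl rfl)
    · rw [Measure.map_smul, Measure.map_add _ _ measurable_snd, hP.2, hQ.2]
      exact h2 ν (Or.inr rfl)
  -- fundamental gap estimate at the level of F
  have hgapF : ∀ P Q : Measure (X × X), IsCoupling P μ ν → IsCoupling Q μ ν →
      P ≪ m → Q ≪ m →
      2 * I + ENNReal.ofReal ε * (2⁻¹ * Hell P Q m) ≤ F P + F Q := by
    intro P Q hP hQ hPac hQac
    haveI := hP.isProbabilityMeasure
    haveI := hQ.isProbabilityMeasure
    set R : Measure (X × X) := (2⁻¹ : ℝ≥0∞) • (P + Q) with hR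
    have hRc : IsCoupling R μ ν := hmidc P Q hP hQ
    have gap := KL_gap P Q m hPac hQac
    have hlin : ∫⁻ p, ENNReal.ofReal (c p.1 p.2) ∂(R)
        = 2⁻¹ * (∫⁻ p, ENNReal.ofReal (c p.1 p.2) ∂P + ∫⁻ p, ENNReal.ofReal (c p.1 p.2) ∂Q) := by
      rw [hR, lintegral_smul_measure, lintegral_add_measure, smul_eq_mul]
    have htwo : ∀ x : ℝ≥0∞, 2 * (2⁻¹ * x) = x := by
      intro x
      rw [← mul_assoc, ENNReal.mul_inv_cancel two_ne_zero ENNReal.ofNat_ne_top, one_mul]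
    calc 2 * I + ENNReal.ofReal ε * (2⁻¹ * Hell P Q m)
        ≤ 2 * F R + ENNReal.ofReal ε * (2⁻¹ * Hell P Q m) := by
          gcongr
          exact hIle R hRc
      _ = 2 * (∫⁻ p, ENNReal.ofReal (c p.1 p.2) ∂(R)) +
            (2 * (ENNReal.ofReal ε * KL R m) + ENNReal.ofReal ε * (2⁻¹ * Hell P Q m)) := by
          rw [hF, regOTFunctional, ← hm]; ring
      _ = (∫⁻ p, ENNReal.ofReal (c p.1 p.2) ∂P + ∫⁻ p, ENNReal.ofReal (c p.1 p.2) ∂Q) +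
            ENNReal.ofReal ε * (2 * KL R m + 2⁻¹ * Hell P Q m) := by
          rw [hlin, htwo]; ring
      _ ≤ (∫⁻ p, ENNReal.ofReal (c p.1 p.2) ∂P + ∫⁻ p, ENNReal.ofReal (c p.1 p.2) ∂Q) +
            ENNReal.ofReal ε * (KL P m + KL Q m) := by
          gcongr
      _ = F P + F Q := by
          rw [hF, regOTFunctional, regOTFunctional, ← hm]; ring
  have htwo : ∀ x : ℝ≥0∞, 2 * (2⁻¹ * x) = x := by
    intro x
    rw [← mul_assoc, ENNReal.mul_inv_cancel two_ne_zero ENNReal.ofNat_ne_top, one_mul]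
  have h2Itop : (2 : ℝ≥0∞) * I ≠ ∞ := ENNReal.mul_ne_top (by simp) hItop
  -- Hellinger bound along the minimizing sequence
  have hHell : ∀ n k : ℕ, Hell (ps n) (ps k) m
      ≤ 2 * ((4⁻¹ : ℝ≥0∞) ^ (n + 1) + (4⁻¹ : ℝ≥0∞) ^ (k + 1)) := by
    intro n k
    have h1 := hgapF (ps n) (ps k) (hps n) (hps k) (hac n) (hac k)
    have h2 : F (ps n) + F (ps k) ≤ 2 * I +
        ENNReal.ofReal ε * ((4⁻¹ : ℝ≥0∞) ^ (n + 1) + (4⁻¹ : ℝ≥0∞) ^ (k + 1)) := by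
      calc F (ps n) + F (ps k)
          ≤ (I + ENNReal.ofReal ε * (4⁻¹ : ℝ≥0∞) ^ (n + 1))
            + (I + ENNReal.ofReal ε * (4⁻¹ : ℝ≥0∞) ^ (k + 1)) := add_le_add (hpsF n) (hpsF k)
        _ = 2 * I + ENNReal.ofReal ε * ((4⁻¹ : ℝ≥0∞) ^ (n + 1) + (4⁻¹ : ℝ≥0∞) ^ (k + 1)) := by
            ring
    have h3 : ENNReal.ofReal ε * (2⁻¹ * Hell (ps n) (ps k) m)
        ≤ ENNReal.ofReal ε * ((4⁻¹ : ℝ≥0∞) ^ (n + 1) + (4⁻¹ : ℝ≥0∞) ^ (k + 1)) :=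
      (ENNReal.add_le_add_iff_left h2Itop).mp (h1.trans h2)
    have h4 : 2⁻¹ * Hell (ps n) (ps k) m
        ≤ (4⁻¹ : ℝ≥0∞) ^ (n + 1) + (4⁻¹ : ℝ≥0∞) ^ (k + 1) :=
      (ENNReal.mul_le_mul_iff_right he0 hetop).mp h3
    calc Hell (ps n) (ps k) m = 2 * (2⁻¹ * Hell (ps n) (ps k) m) := (htwo _).symm
      _ ≤ 2 * ((4⁻¹ : ℝ≥0∞) ^ (n + 1) + (4⁻¹ : ℝ≥0∞) ^ (k + 1)) := by gcongr
  -- real densities of the minimizing sequence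
  set a : ℕ → X × X → ℝ := fun n => dens (ps n) m with ha
  have hameas : ∀ n, Measurable (a n) := fun n => measurable_dens _ _
  have ha0 : ∀ n p, 0 ≤ a n p := fun n p => dens_nonneg _ _ p
  have hinta : ∀ n, ∫⁻ p, ENNReal.ofReal (a n p) ∂m = 1 := by
    intro n
    haveI := hprob n
    rw [ha]
    rw [lintegral_ofReal_dens (hac n)]
    exact measure_univ
  -- consecutive Hellinger distances decay geometrically
  have hHcon : ∀ n : ℕ, Hell (ps (n+1)) (ps n) m ≤ (4⁻¹ : ℝ≥0∞) ^ n := by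
    intro n
    refine (hHell (n+1) n).trans ?_
    have e1 : (4⁻¹ : ℝ≥0∞) ^ (n + 1 + 1) ≤ (4⁻¹ : ℝ≥0∞) ^ (n + 1) :=
      pow_le_pow_right_of_le_one' (by norm_num) (by omega)
    calc 2 * ((4⁻¹ : ℝ≥0∞) ^ (n + 1 + 1) + (4⁻¹ : ℝ≥0∞) ^ (n + 1))
        ≤ 2 * ((4⁻¹ : ℝ≥0∞) ^ (n + 1) + (4⁻¹ : ℝ≥0∞) ^ (n + 1)) := by gcongr
      _ = (4 * 4⁻¹) * (4⁻¹ : ℝ≥0∞) ^ n := by rw [pow_succ]; ring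
      _ = (4⁻¹ : ℝ≥0∞) ^ n := by
          rw [ENNReal.mul_inv_cancel (by norm_num) (by norm_num), one_mul]
  have hhalf : ∀ n : ℕ, ((4⁻¹ : ℝ≥0∞) ^ n) ^ (1/2 : ℝ) = (2⁻¹ : ℝ≥0∞) ^ n := by
    intro n
    have e4 : (4⁻¹ : ℝ≥0∞) = (2⁻¹ : ℝ≥0∞) ^ (2:ℕ) := by
      rw [← ENNReal.inv_pow]
      norm_num
    rw [e4, ← pow_mul, ← ENNReal.rpow_natCast (2⁻¹ : ℝ≥0∞) (2*n), ← ENNReal.rpow_mul]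
    rw [show ((2*n : ℕ) : ℝ) * (1/2 : ℝ) = (n : ℝ) by push_cast; ring]
    rw [ENNReal.rpow_natCast]
  -- consecutive L¹ distances decay geometrically
  have hD : ∀ n : ℕ, ∫⁻ p, ENNReal.ofReal (|a (n+1) p - a n p|) ∂m
      ≤ 2 * (2⁻¹ : ℝ≥0∞) ^ n := by
    intro n
    have hcs := l1_le_sqrt_hell (m := m) (hameas (n+1)) (hameas n)
      (ha0 (n+1)) (ha0 n) (le_of_eq (hinta (n+1))) (le_of_eq (hinta n))
    refine hcs.trans ?_
    have : (∫⁻ p, ENNReal.ofReal ((Real.sqrt (a (n+1) p) - Real.sqrt (a n p)) ^ 2) ∂m) ^ (1/2:ℝ)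
        ≤ (2⁻¹ : ℝ≥0∞) ^ n := by
      rw [← hhalf n]
      exact ENNReal.rpow_le_rpow (hHcon n) (by norm_num)
    calc 2 * (∫⁻ p, ENNReal.ofReal ((Real.sqrt (a (n+1) p) - Real.sqrt (a n p)) ^ 2) ∂m) ^ (1/2:ℝ)
        ≤ 2 * (2⁻¹ : ℝ≥0∞) ^ n := by gcongr
      _ = 2 * (2⁻¹ : ℝ≥0∞) ^ n := rfl
  -- summability of the L¹ increments, and a.e. convergence
  set g : ℕ → X × X → ℝ≥0∞ := fun n p => ENNReal.ofReal (|a (n+1) p - a n p|) with hg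
  have hgmeas : ∀ n, Measurable (g n) := fun n =>
    ((hameas (n+1)).sub (hameas n)).abs.ennreal_ofReal
  have hgsum : ∫⁻ p, ∑' n, g n p ∂m ≠ ∞ := by
    rw [lintegral_tsum fun n => (hgmeas n).aemeasurable]
    have : ∑' n, ∫⁻ p, g n p ∂m ≤ ∑' n : ℕ, 2 * (2⁻¹ : ℝ≥0∞) ^ n :=
      ENNReal.tsum_le_tsum fun n => hD n
    refine (this.trans_lt ?_).ne
    rw [ENNReal.tsum_mul_left, ENNReal.tsum_geometric]
    have : (1 - 2⁻¹ : ℝ≥0∞)⁻¹ = 2 := by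
      rw [ENNReal.one_sub_inv_two]
      simp
    rw [this]
    norm_num
  have haesum : ∀ᵐ p ∂m, ∑' n, g n p ≠ ∞ := by
    filter_upwards [ae_lt_top (Measurable.ennreal_tsum hgmeas) hgsum] with p hp
    exact hp.ne
  have haefin : ∀ᵐ p ∂m, ∀ n, (ps n).rnDeriv m p < ∞ :=
    ae_all_iff.2 fun n => Measure.rnDeriv_lt_top _ _
  -- the limiting density
  set fi : X × X → ℝ≥0∞ := fun p => liminf (fun n => (ps n).rnDeriv m p) atTop with hfi
  have hfimeas : Measurable fi := Measurable.liminf fun n => Measure.measurable_rnDeriv _ _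
  set aInf : X × X → ℝ := fun p => (fi p).toReal with haInf
  have haImeas : Measurable aInf := hfimeas.ennreal_toReal
  have haI0 : ∀ p, 0 ≤ aInf p := fun p => ENNReal.toReal_nonneg
  have hconvA : ∀ᵐ p ∂m, fi p ≠ ∞ ∧
      Filter.Tendsto (fun n => a n p) atTop (nhds (aInf p)) := by
    filter_upwards [haesum, haefin] with p h1 h2
    have hsummable : Summable fun n => |a (n+1) p - a n p| := by
      have h3 := ENNReal.summable_toReal h1
      refine h3.congr fun n => ?_
      rw [hg]
      simp [ENNReal.toReal_ofReal (abs_nonneg _)]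
    have hcauchy : CauchySeq fun n => a n p := by
      apply cauchySeq_of_summable_dist
      refine hsummable.congr fun n => ?_
      rw [Real.dist_eq, abs_sub_comm]
    obtain ⟨L, hL⟩ := cauchySeq_tendsto_of_complete hcauchy
    have hL0 : 0 ≤ L := ge_of_tendsto' hL fun n => ha0 n p
    have hrn : ∀ n, (ps n).rnDeriv m p = ENNReal.ofReal (a n p) := by
      intro n
      rw [ha]
      simp [dens, ENNReal.ofReal_toReal (h2 n).ne]
    have htend : Filter.Tendsto (fun n => (ps n).rnDeriv m p) atTop (nhds (ENNReal.ofReal L)) := by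
      simp only [hrn]
      exact (ENNReal.continuous_ofReal.tendsto L).comp hL
    have hfieq : fi p = ENNReal.ofReal L := htend.liminf_eq
    have hfine : fi p ≠ ∞ := by rw [hfieq]; exact ENNReal.ofReal_ne_top
    refine ⟨hfine, ?_⟩
    have : aInf p = L := by rw [haInf]; simp [hfieq, ENNReal.toReal_ofReal hL0]
    rw [this]
    exact hL
  -- L¹ distance from `a n` to arbitrary later terms
  have hDfar : ∀ n k : ℕ, ∫⁻ p, ENNReal.ofReal (|a (n+k) p - a n p|) ∂m
      ≤ 4 * (2⁻¹ : ℝ≥0∞) ^ n := by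
    intro n k
    have hstep : ∫⁻ p, ENNReal.ofReal (|a (n+k) p - a n p|) ∂m
        ≤ ∑ i ∈ Finset.range k, 2 * (2⁻¹ : ℝ≥0∞) ^ (n + i) := by
      induction k with
      | zero => simp
      | succ k ih =>
        have htri : ∀ p, ENNReal.ofReal (|a (n+(k+1)) p - a n p|)
            ≤ g (n+k) p + ENNReal.ofReal (|a (n+k) p - a n p|) := by
          intro p
          rw [hg]
          calc ENNReal.ofReal (|a (n+(k+1)) p - a n p|)
              ≤ ENNReal.ofReal (|a (n+k+1) p - a (n+k) p| + |a (n+k) p - a n p|) := by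
                apply ENNReal.ofReal_le_ofReal
                have : a (n+(k+1)) p - a n p
                    = (a (n+k+1) p - a (n+k) p) + (a (n+k) p - a n p) := by
                  rw [show n+(k+1) = n+k+1 by omega]; ring
                rw [this]
                exact abs_add_le _ _
            _ ≤ _ := ENNReal.ofReal_add_le
        calc ∫⁻ p, ENNReal.ofReal (|a (n+(k+1)) p - a n p|) ∂m
            ≤ ∫⁻ p, (g (n+k) p + ENNReal.ofReal (|a (n+k) p - a n p|)) ∂m :=
              lintegral_mono htri
          _ = ∫⁻ p, g (n+k) p ∂m + ∫⁻ p, ENNReal.ofReal (|a (n+k) p - a n p|) ∂m :=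
              lintegral_add_left (hgmeas (n+k)) _
          _ ≤ 2 * (2⁻¹ : ℝ≥0∞) ^ (n+k) + ∑ i ∈ Finset.range k, 2 * (2⁻¹ : ℝ≥0∞) ^ (n + i) :=
              add_le_add (hD (n+k)) ih
          _ = ∑ i ∈ Finset.range (k+1), 2 * (2⁻¹ : ℝ≥0∞) ^ (n + i) := by
              rw [Finset.sum_range_succ]; ring
    refine hstep.trans ?_
    calc ∑ i ∈ Finset.range k, 2 * (2⁻¹ : ℝ≥0∞) ^ (n + i)
        ≤ ∑' i : ℕ, 2 * (2⁻¹ : ℝ≥0∞) ^ (n + i) := ENNReal.sum_le_tsum _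
      _ = 2 * (2⁻¹ : ℝ≥0∞) ^ n * ∑' i : ℕ, (2⁻¹ : ℝ≥0∞) ^ i := by
          rw [← ENNReal.tsum_mul_left]
          congr 1
          funext i
          rw [pow_add]; ring
      _ = 4 * (2⁻¹ : ℝ≥0∞) ^ n := by
          rw [ENNReal.tsum_geometric, ENNReal.one_sub_inv_two]
          rw [show ((2⁻¹ : ℝ≥0∞))⁻¹ = 2 by simp]
          ring
  -- L¹ distance from `a n` to the limit density
  have hDinf : ∀ n : ℕ, ∫⁻ p, ENNReal.ofReal (|aInf p - a n p|) ∂m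
      ≤ 4 * (2⁻¹ : ℝ≥0∞) ^ n := by
    intro n
    have hpt : ∀ᵐ p ∂m, ENNReal.ofReal (|aInf p - a n p|)
        = liminf (fun k => ENNReal.ofReal (|a k p - a n p|)) atTop := by
      filter_upwards [hconvA] with p hp
      have htend : Filter.Tendsto (fun k => ENNReal.ofReal (|a k p - a n p|)) atTop
          (nhds (ENNReal.ofReal (|aInf p - a n p|))) := by
        apply (ENNReal.continuous_ofReal.tendsto _).comp
        exact (continuous_abs.tendsto _).comp (hp.2.sub tendsto_const_nhds)
      exact htend.liminf_eq.symm
    calc ∫⁻ p, ENNReal.ofReal (|aInf p - a n p|) ∂m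
        = ∫⁻ p, liminf (fun k => ENNReal.ofReal (|a k p - a n p|)) atTop ∂m :=
          lintegral_congr_ae hpt
      _ ≤ liminf (fun k => ∫⁻ p, ENNReal.ofReal (|a k p - a n p|) ∂m) atTop :=
          lintegral_liminf_le fun k => ((hameas k).sub (hameas n)).abs.ennreal_ofReal
      _ ≤ 4 * (2⁻¹ : ℝ≥0∞) ^ n := by
          apply Filter.liminf_le_of_frequently_le'
          rw [Filter.frequently_atTop]
          intro b
          refine ⟨max b n, le_max_left _ _, ?_⟩
          have : max b n = n + (max b n - n) := by omega
          rw [this]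
          exact hDfar n _
  -- the candidate minimizer
  set pi0 : Measure (X × X) := m.withDensity fi with hpi0
  have hpi0ac : pi0 ≪ m := withDensity_absolutelyContinuous _ _
  have hfiofReal : fi =ᵐ[m] fun p => ENNReal.ofReal (aInf p) := by
    filter_upwards [hconvA] with p hp
    exact (ENNReal.ofReal_toReal hp.1).symm
  have hfi_int : ∫⁻ p, fi p ∂m ≤ 1 := by
    refine (lintegral_liminf_le fun n => Measure.measurable_rnDeriv _ _).trans ?_
    have hone : ∀ n, ∫⁻ p, (ps n).rnDeriv m p ∂m = 1 := by
      intro n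
      haveI := hprob n
      rw [@Measure.lintegral_rnDeriv _ _ _ _ (Measure.haveLebesgueDecomposition_of_sigmaFinite _ _) (hac n)]
      exact measure_univ
    simp only [hone]
    simp
  have htend0 : Filter.Tendsto (fun n : ℕ => 4 * (2⁻¹ : ℝ≥0∞) ^ n) atTop (nhds 0) := by
    have := ENNReal.Tendsto.const_mul (a := (4:ℝ≥0∞))
      (ENNReal.tendsto_pow_atTop_nhds_zero_of_lt_one
        (by norm_num : (2⁻¹ : ℝ≥0∞) < 1)) (Or.inr (by norm_num))
    simpa using this
  have hkey : ∀ A : Set (X × X), MeasurableSet A → ∀ v : ℝ≥0∞, v ≠ ∞ →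
      (∀ n, ps n A = v) → pi0 A = v := by
    intro A hA v hv hvn
    have hApi0 : pi0 A = ∫⁻ p in A, fi p ∂m := withDensity_apply _ hA
    have hAn : ∀ n, ∫⁻ p in A, ENNReal.ofReal (a n p) ∂m = v := by
      intro n
      haveI := hprob n
      rw [ha, setLIntegral_dens (hac n) hA]
      exact hvn n
    have hb1 : ∀ n, pi0 A ≤ v + 4 * (2⁻¹:ℝ≥0∞) ^ n := by
      intro n
      rw [hApi0]
      calc ∫⁻ p in A, fi p ∂m
          ≤ ∫⁻ p in A, (ENNReal.ofReal (a n p) + ENNReal.ofReal (|aInf p - a n p|)) ∂m := by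
            apply lintegral_mono_ae
            apply ae_restrict_of_ae
            filter_upwards [hfiofReal] with p hp
            rw [hp]
            calc ENNReal.ofReal (aInf p) ≤ ENNReal.ofReal (a n p + |aInf p - a n p|) := by
                  apply ENNReal.ofReal_le_ofReal
                  have h5 := le_abs_self (aInf p - a n p)
                  linarith
              _ ≤ _ := ENNReal.ofReal_add_le
        _ = ∫⁻ p in A, ENNReal.ofReal (a n p) ∂m
              + ∫⁻ p in A, ENNReal.ofReal (|aInf p - a n p|) ∂m :=
            lintegral_add_left ((hameas n).ennreal_ofReal) _
        _ ≤ v + 4 * (2⁻¹:ℝ≥0∞) ^ n := by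
            gcongr
            · exact le_of_eq (hAn n)
            · exact (setLIntegral_le_lintegral _ _).trans (hDinf n)
    have hb2 : ∀ n, v ≤ pi0 A + 4 * (2⁻¹:ℝ≥0∞) ^ n := by
      intro n
      rw [hApi0, ← hAn n]
      calc ∫⁻ p in A, ENNReal.ofReal (a n p) ∂m
          ≤ ∫⁻ p in A, (fi p + ENNReal.ofReal (|aInf p - a n p|)) ∂m := by
            apply lintegral_mono_ae
            apply ae_restrict_of_ae
            filter_upwards [hfiofReal] with p hp
            rw [hp]
            calc ENNReal.ofReal (a n p) ≤ ENNReal.ofReal (aInf p + |aInf p - a n p|) := by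
                  apply ENNReal.ofReal_le_ofReal
                  have h5 := neg_abs_le (aInf p - a n p)
                  linarith
              _ ≤ _ := ENNReal.ofReal_add_le
        _ = ∫⁻ p in A, fi p ∂m + ∫⁻ p in A, ENNReal.ofReal (|aInf p - a n p|) ∂m :=
            lintegral_add_left hfimeas _
        _ ≤ ∫⁻ p in A, fi p ∂m + 4 * (2⁻¹:ℝ≥0∞) ^ n := by
            gcongr
            exact (setLIntegral_le_lintegral _ _).trans (hDinf n)
    have hpi0fin : pi0 A ≠ ∞ := by
      rw [hApi0]
      exact (((setLIntegral_le_lintegral _ _).trans hfi_int).trans_lt (by norm_num)).ne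
    exact eq_of_forall_le_add hpi0fin hv _ htend0 hb1 hb2
  have hpi0c : IsCoupling pi0 μ ν := by
    constructor
    · apply Measure.ext
      intro s hs
      rw [Measure.map_apply measurable_fst hs]
      apply hkey _ (measurable_fst hs) (μ s) (measure_ne_top μ s)
      intro n
      conv_rhs => rw [← (hps n).1]
      rw [Measure.map_apply measurable_fst hs]
    · apply Measure.ext
      intro s hs
      rw [Measure.map_apply measurable_snd hs]
      apply hkey _ (measurable_snd hs) (ν s) (measure_ne_top ν s)
      intro n
      conv_rhs => rw [← (hps n).2]
      rw [Measure.map_apply measurable_snd hs]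
  haveI hpi0prob : IsProbabilityMeasure pi0 := hpi0c.isProbabilityMeasure
  -- squeeze: F (ps n) → I
  have hFto : Filter.Tendsto (fun n => F (ps n)) atTop (nhds I) := by
    have h1 : Filter.Tendsto (fun n : ℕ => (4⁻¹:ℝ≥0∞) ^ (n+1)) atTop (nhds 0) :=
      (ENNReal.tendsto_pow_atTop_nhds_zero_of_lt_one
        (by norm_num : (4⁻¹:ℝ≥0∞) < 1)).comp (tendsto_add_atTop_nat 1)
    have h2 := ENNReal.Tendsto.const_mul (a := ENNReal.ofReal ε) h1 (Or.inr hetop)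
    have hup : Filter.Tendsto (fun n => I + ENNReal.ofReal ε * (4⁻¹:ℝ≥0∞) ^ (n+1))
        atTop (nhds I) := by
      have h3 := Filter.Tendsto.add (tendsto_const_nhds (x := I) (f := atTop)) h2
      simpa using h3
    exact tendsto_of_tendsto_of_tendsto_of_le_of_le tendsto_const_nhds hup
      (fun n => hIle _ (hps n)) hpsF
  -- density of pi0
  have hdens0 : dens pi0 m =ᵐ[m] aInf := by
    filter_upwards [Measure.rnDeriv_withDensity m hfimeas] with p hp
    rw [dens, hp]
  -- the functional in density form
  set G : (X × X → ℝ) → X × X → ℝ≥0∞ := fun b p =>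
    ENNReal.ofReal (c p.1 p.2 * b p) + ENNReal.ofReal ε * ENNReal.ofReal (entf (b p)) with hG
  have hGmeas : ∀ b : X × X → ℝ, Measurable b → Measurable (G b) := by
    intro b hb
    exact ((hc.measurable.mul hb).ennreal_ofReal).add
      (((continuous_entf.measurable.comp hb).ennreal_ofReal).const_mul _)
  have hFn : ∀ n, F (ps n) = ∫⁻ p, G (a n) p ∂m := by
    intro n
    haveI := hprob n
    rw [hF]
    exact regOT_eq_density c ε μ ν hc hc0 (hac n)
  have hFpi0 : F pi0 = ∫⁻ p, G aInf p ∂m := by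
    rw [hF, regOT_eq_density c ε μ ν hc hc0 hpi0ac]
    apply lintegral_congr_ae
    filter_upwards [hdens0] with p hp
    rw [hG]
    simp only []
    rw [hp]
  -- Fatou
  have hFatou : F pi0 ≤ I := by
    rw [hFpi0]
    have hptconv : ∀ᵐ p ∂m, Filter.Tendsto (fun n => G (a n) p) atTop (nhds (G aInf p)) := by
      filter_upwards [hconvA] with p hp
      have h1 : Filter.Tendsto (fun n => a n p) atTop (nhds (aInf p)) := hp.2
      have hc1 : Filter.Tendsto (fun n => ENNReal.ofReal (c p.1 p.2 * a n p)) atTop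
          (nhds (ENNReal.ofReal (c p.1 p.2 * aInf p))) :=
        (ENNReal.continuous_ofReal.tendsto _).comp (tendsto_const_nhds.mul h1)
      have hc2 : Filter.Tendsto (fun n => ENNReal.ofReal (entf (a n p))) atTop
          (nhds (ENNReal.ofReal (entf (aInf p)))) :=
        (ENNReal.continuous_ofReal.tendsto _).comp ((continuous_entf.tendsto _).comp h1)
      exact hc1.add (ENNReal.Tendsto.const_mul hc2 (Or.inr hetop))
    calc ∫⁻ p, G aInf p ∂m = ∫⁻ p, liminf (fun n => G (a n) p) atTop ∂m := by
          apply lintegral_congr_ae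
          filter_upwards [hptconv] with p hp
          exact hp.liminf_eq.symm
      _ ≤ liminf (fun n => ∫⁻ p, G (a n) p ∂m) atTop :=
          lintegral_liminf_le fun n => hGmeas (a n) (hameas n)
      _ = liminf (fun n => F (ps n)) atTop := by simp only [← hFn]
      _ = I := hFto.liminf_eq
  have hFpi0I : F pi0 = I := le_antisymm hFatou (hIle _ hpi0c)
  refine ⟨pi0, hpi0c, ?_, ?_, ?_⟩
  · rw [← hF] at *
    rw [hFpi0I]
    exact hItop
  · intro P hP
    rw [hFpi0I]
    exact hIle P hP
  · intro P hP hPF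
    rw [hFpi0I] at hPF
    have hPac : P ≪ m := by
      by_contra h
      have htop : F P = ∞ := by
        rw [hF]
        exact regOT_top_of_not_ac c ε μ ν hε h
      rw [htop] at hPF
      exact hItop hPF.symm
    haveI := hP.isProbabilityMeasure
    have gap := hgapF P pi0 hP hpi0c hPac hpi0ac
    rw [hPF, hFpi0I] at gap
    have h0 : ENNReal.ofReal ε * (2⁻¹ * Hell P pi0 m) = 0 := by
      have h1 : 2*I + ENNReal.ofReal ε * (2⁻¹ * Hell P pi0 m) ≤ 2*I + 0 := by
        rw [add_zero]
        refine gap.trans (le_of_eq ?_)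
        rw [two_mul]
      have h2 := (ENNReal.add_le_add_iff_left h2Itop).mp h1
      exact le_antisymm h2 zero_le'
    have hH0 : Hell P pi0 m = 0 := by
      rcases mul_eq_zero.mp h0 with h | h
      · exact absurd h he0
      rcases mul_eq_zero.mp h with h' | h'
      · norm_num at h'
      · exact h'
    have hae : dens P m =ᵐ[m] dens pi0 m := by
      have h1 := (lintegral_eq_zero_iff (measurable_hell_integrand P pi0 m)).mp hH0
      filter_upwards [h1] with p hp
      simp only [Pi.zero_apply, ENNReal.ofReal_eq_zero] at hp
      have h2 : Real.sqrt (dens P m p) = Real.sqrt (dens pi0 m p) := by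
        nlinarith [sq_nonneg (Real.sqrt (dens P m p) - Real.sqrt (dens pi0 m p))]
      have h3 := congrArg (fun t : ℝ => t^2) h2
      simpa [Real.sq_sqrt (dens_nonneg P m p), Real.sq_sqrt (dens_nonneg pi0 m p)] using h3
    conv_lhs => rw [eq_withDensity_dens hPac]
    conv_rhs => rw [eq_withDensity_dens hpi0ac]
    exact withDensity_congr_ae (hae.mono fun p hp => by simp only [hp])
end

section
/- For probability measures μ, ν on a compact metric space X and continuous cost c, lim_{ε→∞} OT_ε(μ,ν) = ∫_{X×X} c d(μ⊗ν). -/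
open MeasureTheory Filter Topology
open scoped ENNReal NNReal Classical

/-- The entropic regularized optimal transport cost
`OT_ε(μ,ν) = inf_{π ∈ Π(μ,ν)} { ∫ c dπ + ε KL(π, μ⊗ν) }`. -/
noncomputable def OTeps {X : Type*} [MeasurableSpace X]
    (c : X → X → ℝ) (ε : ℝ) (μ ν : Measure X) : ℝ≥0∞ :=
  ⨅ π : {π : Measure (X × X) // IsCoupling π μ ν}, regOTFunctional c ε μ ν π


lemma loglem {u : ℝ} (hu : 1 ≤ u) : Real.log u ≤ (u - u⁻¹)/2 := by
  have key : ∀ x ∈ Set.Ici (1:ℝ), 0 ≤ (x - x⁻¹)/2 - Real.log x := by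
    have hmono : MonotoneOn (fun x : ℝ => (x - x⁻¹)/2 - Real.log x) (Set.Ici 1) := by
      have hder : ∀ x : ℝ, 0 < x → HasDerivAt (fun x : ℝ => (x - x⁻¹)/2 - Real.log x)
          ((1 - (-(x^2)⁻¹))/2 - x⁻¹) x := fun x hx0 =>
        (((hasDerivAt_id x).sub (hasDerivAt_inv hx0.ne')).div_const 2).sub
            (Real.hasDerivAt_log hx0.ne')
      apply monotoneOn_of_deriv_nonneg (convex_Ici 1)
      · apply ContinuousOn.sub
        · exact (continuousOn_id.sub (continuousOn_inv₀.mono (by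
            intro x hx; simp only [Set.mem_Ici] at hx
            simp only [Set.mem_compl_iff, Set.mem_singleton_iff]; intro h; simp [h] at hx; linarith))).div_const 2
        · exact Real.continuousOn_log.mono (by
            intro x hx; simp only [Set.mem_Ici] at hx
            simp only [Set.mem_compl_iff, Set.mem_singleton_iff]; intro h; simp [h] at hx; linarith)
      · intro x hx
        rw [interior_Ici] at hx
        exact (hder x (by linarith [Set.mem_Ioi.mp hx])).differentiableAt.differentiableWithinAt
      · intro x hx
        rw [interior_Ici] at hx
        have hx1 : (1:ℝ) < x := hx
        have hx0 : (0:ℝ) < x := by linarith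
        rw [(hder x hx0).deriv]
        have h2 : (0:ℝ) < x^2 := by positivity
        rw [sub_nonneg, sub_neg_eq_add, le_div_iff₀ (by norm_num : (0:ℝ) < 2)]
        rw [show x⁻¹ * 2 = 2*x/x^2 by field_simp, div_le_iff₀ h2] at *
        have h4 : (1 + (x^2)⁻¹) * x^2 = x^2 + 1 := by field_simp
        rw [h4]
        nlinarith [sq_nonneg (x-1)]
    intro x hx
    have := hmono (Set.mem_Ici.mpr le_rfl) hx (Set.mem_Ici.mp hx)
    simpa using this
  have := key u hu
  linarith

lemma hfun_nonneg {t : ℝ} (ht : 0 ≤ t) : 0 ≤ t * Real.log t - t + 1 := by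
  rcases eq_or_lt_of_le ht with h | h
  · simp [← h]
  · have h1 := Real.log_le_sub_one_of_pos (show 0 < t⁻¹ by positivity)
    rw [Real.log_inv] at h1
    have h2 : t * (-Real.log t) ≤ t * (t⁻¹ - 1) := by
      exact mul_le_mul_of_nonneg_left h1 ht
    rw [mul_sub, mul_inv_cancel₀ h.ne'] at h2
    nlinarith

lemma quadlem {t : ℝ} (ht : 0 ≤ t) (ht1 : t ≤ 1) :
    (1-t)^2/2 ≤ t * Real.log t - t + 1 := by
  rcases eq_or_lt_of_le ht with h | h
  · simp [← h]; norm_num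
  · have h1 := loglem ((one_le_inv₀ h).mpr ht1)
    rw [Real.log_inv, inv_inv] at h1
    have h2 : t * ((t - t⁻¹)/2) ≤ t * Real.log t := by
      exact mul_le_mul_of_nonneg_left (by linarith) ht
    have h3 : t * ((t - t⁻¹)/2) = (t^2 - 1)/2 := by field_simp
    nlinarith

lemma keylem {c C ε t : ℝ} (hc : 0 ≤ c) (hcC : c ≤ C) (ht : 0 ≤ t) (hε : 0 < ε) :
    c ≤ c * t + ε * (t * Real.log t - t + 1) + C^2/(2*ε) := by
  have hh := hfun_nonneg ht
  rcases le_or_gt 1 t with h1 | h1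
  · have : c ≤ c * t := by nlinarith
    have : 0 ≤ C^2/(2*ε) := by positivity
    nlinarith
  · have hq := quadlem ht h1.le
    have hC : 0 ≤ C := le_trans hc hcC
    -- C*(1-t) ≤ ε*(1-t)^2/2 + C^2/(2ε)
    have hAM : C*(1-t) ≤ ε*((1-t)^2/2) + C^2/(2*ε) := by
      rw [← sub_nonneg]
      have hexp : ε*((1-t)^2/2) + C^2/(2*ε) - C*(1-t) = (ε*(1-t) - C)^2/(2*ε) := by
        field_simp; ring
      rw [hexp]; positivity
    have : c * (1-t) ≤ C * (1-t) := by nlinarith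
    nlinarith [mul_le_mul_of_nonneg_left hq hε.le]

/-- For probability measures `μ, ν` on a compact metric space and continuous nonnegative cost,
`lim_{ε→∞} OT_ε(μ,ν) = ∫ c d(μ⊗ν)`. -/
theorem OTeps_tendsto_atTop {X : Type*} [MetricSpace X] [CompactSpace X]
    [MeasurableSpace X] [BorelSpace X]
    (c : X → X → ℝ) (hc : Continuous fun p : X × X => c p.1 p.2)
    (hc0 : ∀ x y, 0 ≤ c x y)
    (μ ν : Measure X) [IsProbabilityMeasure μ] [IsProbabilityMeasure ν] :
    Filter.Tendsto (fun ε : ℝ => OTeps c ε μ ν) Filter.atTop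
      (nhds (∫⁻ p, ENNReal.ofReal (c p.1 p.2) ∂(μ.prod ν))) := by
  -- X is nonempty
  have hX : Nonempty X := by
    by_contra h
    rw [not_nonempty_iff] at h
    have : μ Set.univ = 1 := measure_univ
    simp [Set.univ_eq_empty_iff.mpr h] at this
  -- bound C on c
  obtain ⟨p₀, -, hp₀⟩ := isCompact_univ.exists_isMaxOn (Set.univ_nonempty)
    hc.continuousOn
  set C : ℝ := c p₀.1 p₀.2 with hC
  have hCb : ∀ p : X × X, c p.1 p.2 ≤ C := fun p => hp₀ (Set.mem_univ p)
  have hC0 : 0 ≤ C := le_trans (hc0 p₀.1 p₀.2) le_rfl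
  set ρ : Measure (X × X) := μ.prod ν with hρ
  set L : ℝ≥0∞ := ∫⁻ p, ENNReal.ofReal (c p.1 p.2) ∂ρ with hL
  have hmc : Measurable fun p : X × X => ENNReal.ofReal (c p.1 p.2) :=
    hc.measurable.ennreal_ofReal
  have hLle : L ≤ ENNReal.ofReal C := by
    calc L ≤ ∫⁻ _, ENNReal.ofReal C ∂ρ :=
      lintegral_mono fun p => ENNReal.ofReal_le_ofReal (hCb p)
    _ = ENNReal.ofReal C := by simp
  have hLne : L ≠ ∞ := ne_top_of_le_ne_top (by simp) hLle
  -- ρ is a coupling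
  have hρc : IsCoupling ρ μ ν := by
    constructor
    · simp [hρ]
    · simp [hρ]
  -- KL ρ ρ = 0
  have hKLρ : KL ρ ρ = 0 := by
    rw [KL, if_pos (le_refl ρ).absolutelyContinuous]
    rw [← lintegral_zero (μ := ρ)]
    apply lintegral_congr_ae
    filter_upwards [Measure.rnDeriv_self ρ] with x hx
    simp [hx]
  -- Upper bound: OTeps ≤ L for ε ≥ 0
  have hupper : ∀ ε : ℝ, OTeps c ε μ ν ≤ L := by
    intro ε
    have := iInf_le (fun π : {π : Measure (X × X) // IsCoupling π μ ν} =>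
      regOTFunctional c ε μ ν π) ⟨ρ, hρc⟩
    refine le_trans this ?_
    rw [regOTFunctional, ← hρ, hKLρ]
    simp [hL]
  -- Lower bound
  have hlower : ∀ ε : ℝ, 0 < ε →
      L ≤ OTeps c ε μ ν + ENNReal.ofReal (C^2/(2*ε)) := by
    intro ε hε
    rw [OTeps, ENNReal.iInf_add]
    refine le_iInf fun π => ?_
    obtain ⟨π, hπc⟩ := π
    by_cases hac : (π : Measure (X × X)) ≪ ρ
    swap
    · rw [regOTFunctional, KL, ← hρ, if_neg hac, ENNReal.mul_top
        ((ENNReal.ofReal_pos.mpr hε).ne')]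
      simp
    · -- π is a probability measure
      haveI : IsProbabilityMeasure π := by
        constructor
        have : π.map Prod.fst = μ := hπc.1
        rw [← measure_univ (μ := μ), ← this,
          Measure.map_apply measurable_fst MeasurableSet.univ]
        rfl
      set g := π.rnDeriv ρ with hg
      have hgm : Measurable g := Measure.measurable_rnDeriv π ρ
      -- the entropy integrand
      set H : X × X → ℝ≥0∞ := fun x => ENNReal.ofReal
          ((g x).toReal * Real.log (g x).toReal - (g x).toReal + 1) with hH
      have hHm : Measurable H := by
        apply Measurable.ennreal_ofReal
        exact ((hgm.ennreal_toReal.mul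
          (Real.measurable_log.comp hgm.ennreal_toReal)).sub
          hgm.ennreal_toReal).add measurable_const
      have hKL : KL π ρ = ∫⁻ x, H x ∂ρ := by
        rw [KL, if_pos hac]
      have step : L ≤ ∫⁻ x, (g x * ENNReal.ofReal (c x.1 x.2)
          + ENNReal.ofReal ε * H x + ENNReal.ofReal (C^2/(2*ε))) ∂ρ := by
        apply lintegral_mono_ae
        filter_upwards [Measure.rnDeriv_lt_top π ρ] with x hx
        set t : ℝ := (g x).toReal with ht
        have ht0 : 0 ≤ t := ENNReal.toReal_nonneg
        have hgx : g x = ENNReal.ofReal t := (ENNReal.ofReal_toReal hx.ne).symm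
        have key := keylem (hc0 x.1 x.2) (hCb x) ht0 hε
        calc ENNReal.ofReal (c x.1 x.2)
            ≤ ENNReal.ofReal (c x.1 x.2 * t + ε * (t * Real.log t - t + 1)
                + C^2/(2*ε)) := ENNReal.ofReal_le_ofReal key
          _ ≤ ENNReal.ofReal (c x.1 x.2 * t)
              + ENNReal.ofReal (ε * (t * Real.log t - t + 1))
              + ENNReal.ofReal (C^2/(2*ε)) := by
              refine le_trans (ENNReal.ofReal_add_le) ?_
              exact add_le_add ENNReal.ofReal_add_le le_rfl
          _ = g x * ENNReal.ofReal (c x.1 x.2) + ENNReal.ofReal ε * H x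
              + ENNReal.ofReal (C^2/(2*ε)) := by
              rw [ENNReal.ofReal_mul (hc0 x.1 x.2), ENNReal.ofReal_mul hε.le,
                mul_comm, hgx]
      have split : (∫⁻ x, (g x * ENNReal.ofReal (c x.1 x.2)
          + ENNReal.ofReal ε * H x + ENNReal.ofReal (C^2/(2*ε))) ∂ρ)
          = (∫⁻ x, g x * ENNReal.ofReal (c x.1 x.2) ∂ρ)
            + ENNReal.ofReal ε * (∫⁻ x, H x ∂ρ)
            + ENNReal.ofReal (C^2/(2*ε)) := by
        rw [lintegral_add_right _ measurable_const,
          lintegral_add_left (f := fun x => g x * ENNReal.ofReal (c x.1 x.2)) (hgm.mul hmc),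
          lintegral_const_mul _ hHm, lintegral_const, measure_univ, mul_one]
      have hchg : (∫⁻ x, g x * ENNReal.ofReal (c x.1 x.2) ∂ρ)
          = ∫⁻ p, ENNReal.ofReal (c p.1 p.2) ∂π := by
        haveI : SigmaFinite ρ := by rw [hρ]; infer_instance
        haveI : SFinite π := inferInstance
        haveI : π.HaveLebesgueDecomposition ρ := Measure.haveLebesgueDecomposition_of_sigmaFinite π ρ
        exact MeasureTheory.lintegral_rnDeriv_mul hac hmc.aemeasurable
      calc L ≤ _ := step
        _ = _ := split
        _ = regOTFunctional c ε μ ν π + ENNReal.ofReal (C^2/(2*ε)) := by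
            rw [hchg, regOTFunctional, ← hρ, hKL]
  -- conclude by squeeze
  have hδ : Tendsto (fun ε : ℝ => ENNReal.ofReal (C^2/(2*ε))) atTop (nhds 0) := by
    have h1 : Tendsto (fun ε : ℝ => C^2/(2*ε)) atTop (nhds 0) := by
      apply Tendsto.div_atTop tendsto_const_nhds
      exact Tendsto.const_mul_atTop (by norm_num) tendsto_id
    simpa [Function.comp_def] using (ENNReal.continuous_ofReal.tendsto 0).comp h1
  have hlow : Tendsto (fun ε : ℝ => L - ENNReal.ofReal (C^2/(2*ε))) atTop (nhds L) := by
    have := ENNReal.Tendsto.sub (tendsto_const_nhds (x := L)) hδ (Or.inl hLne)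
    simpa using this
  apply tendsto_of_tendsto_of_tendsto_of_le_of_le' hlow tendsto_const_nhds
  · filter_upwards [eventually_gt_atTop (0:ℝ)] with ε hε
    exact tsub_le_iff_right.mpr (hlower ε hε)
  · filter_upwards with ε using hupper ε
end

section
/- Let π_ε denote the unique minimizer of OT_ε(μ,ν) = inf_{π ∈ Π(μ,ν)} { ∫ c dπ + ε KL(π, μ⊗ν) }. Then π_ε converges weakly to μ⊗ν as ε → ∞. -/
open MeasureTheory Filter Topology
open scoped ENNReal NNReal Classical

lemma phi_nonneg' {x : ℝ} (hx : 0 ≤ x) : 0 ≤ x * Real.log x - x + 1 := by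
  rcases hx.eq_or_lt with h | h
  · simp [← h]
  · have h1 : Real.log x⁻¹ ≤ x⁻¹ - 1 := Real.log_le_sub_one_of_pos (by positivity)
    rw [Real.log_inv] at h1
    have h3 : x * x⁻¹ = 1 := mul_inv_cancel₀ h.ne'
    nlinarith [mul_le_mul_of_nonneg_left h1 h.le]

lemma phi_ge_sq' {x : ℝ} (hx : 0 ≤ x) :
    (Real.sqrt x - 1)^2 ≤ x * Real.log x - x + 1 := by
  rcases hx.eq_or_lt with h | h
  · simp [← h]
  · have ht0 : 0 < Real.sqrt x := Real.sqrt_pos.2 h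
    have ht2 : (Real.sqrt x)^2 = x := Real.sq_sqrt hx
    have hlog : Real.log (Real.sqrt x) = Real.log x / 2 := Real.log_sqrt hx
    have hphi : 0 ≤ Real.sqrt x * Real.log (Real.sqrt x) - Real.sqrt x + 1 :=
      phi_nonneg' ht0.le
    rw [hlog] at hphi
    have hx' : x * Real.log x - x + 1
        = (Real.sqrt x)^2 * Real.log x - (Real.sqrt x)^2 + 1 := by rw [ht2]
    rw [hx']
    nlinarith [mul_nonneg ht0.le hphi]

lemma abs_le_phi' {δ x : ℝ} (hδ : 0 < δ) (hx : 0 ≤ x) :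
    |x - 1| ≤ δ + (9/δ + 4) * (x * Real.log x - x + 1) := by
  have hphi0 := phi_nonneg' hx
  have hsq := phi_ge_sq' hx
  set s := Real.sqrt x with hs
  have hs0 : 0 ≤ s := Real.sqrt_nonneg x
  have hs2 : s^2 = x := Real.sq_sqrt hx
  set P := x * Real.log x - x + 1 with hP
  have hfac : |x - 1| = |s - 1| * (s + 1) := by
    have hxx : x - 1 = (s - 1) * (s + 1) := by nlinarith
    rw [hxx, abs_mul, abs_of_nonneg (show (0:ℝ) ≤ s + 1 by linarith)]
  have hd9 : 0 ≤ 9/δ := by positivity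
  by_cases h4 : x ≤ 4
  · have hs4 : s ≤ 2 := by nlinarith
    set a := |s - 1| with ha
    have ha0 : 0 ≤ a := abs_nonneg _
    have ha2 : a^2 = (s-1)^2 := sq_abs _
    have hP2 : a^2 ≤ P := by rw [ha2]; exact hsq
    rw [hfac]
    by_cases hc : a ≤ δ/3
    · nlinarith [mul_nonneg ha0 (by linarith : (0:ℝ) ≤ 2 - s), mul_nonneg hd9 hphi0]
    · push_neg at hc
      have h1 : 3 * a ≤ 9/δ * a^2 := by
        rw [div_mul_eq_mul_div, le_div_iff₀ hδ]
        nlinarith [mul_nonneg ha0 (by linarith : (0:ℝ) ≤ 3*a - δ)]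
      have h2 : 9/δ * a^2 ≤ 9/δ * P := mul_le_mul_of_nonneg_left hP2 hd9
      nlinarith [mul_nonneg ha0 (by linarith : (0:ℝ) ≤ 2 - s)]
  · push_neg at h4
    have hs4 : 2 ≤ s := by nlinarith
    rw [hfac, abs_of_nonneg (by linarith : (0:ℝ) ≤ s - 1)]
    nlinarith [mul_nonneg hd9 hphi0,
      mul_nonneg (by linarith : (0:ℝ) ≤ 3*s - 5) (by linarith : (0:ℝ) ≤ s - 1)]

/-- Let `π_ε` be the unique minimizer of `π ↦ ∫ c dπ + ε KL(π, μ⊗ν)` over couplings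
`π ∈ Π(μ,ν)`. Then `π_ε` converges weakly to `μ ⊗ ν` as `ε → ∞`, i.e. tested against
continuous functions. -/
theorem regOT_minimizers_tendsto_prod {X : Type*} [MetricSpace X] [CompactSpace X]
    [MeasurableSpace X] [BorelSpace X]
    (c : X → X → ℝ) (hc : Continuous fun p : X × X => c p.1 p.2)
    (hc0 : ∀ x y, 0 ≤ c x y)
    (μ ν : Measure X) [IsProbabilityMeasure μ] [IsProbabilityMeasure ν]
    (π : ℝ → Measure (X × X))
    (hπ : ∀ ε : ℝ, 0 < ε → IsCoupling (π ε) μ ν ∧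
      ∀ π' : Measure (X × X), IsCoupling π' μ ν →
        regOTFunctional c ε μ ν (π ε) ≤ regOTFunctional c ε μ ν π') :
    ∀ f : X × X → ℝ, Continuous f →
      Filter.Tendsto (fun ε : ℝ => ∫ p, f p ∂(π ε)) Filter.atTop
        (nhds (∫ p, f p ∂(μ.prod ν))) := by
  intro f hf
  -- X is nonempty
  haveI hX : Nonempty X := by
    by_contra h
    have h0 : (Set.univ : Set X) = ∅ := Set.univ_eq_empty_iff.mpr (not_nonempty_iff.mp h)
    have h1 := measure_univ (μ := μ)
    rw [h0, measure_empty] at h1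
    exact zero_ne_one h1
  haveI hXX : Nonempty (X × X) := instNonemptyProd
  -- bound on c
  obtain ⟨p0, -, hCmax⟩ := isCompact_univ.exists_isMaxOn Set.univ_nonempty hc.continuousOn
  have hC' : ∀ p : X × X, c p.1 p.2 ≤ c p0.1 p0.2 := fun p => hCmax (Set.mem_univ p)
  set C := c p0.1 p0.2 with hCdef
  have hC0 : 0 ≤ C := hc0 _ _
  -- bound on f
  obtain ⟨q0, -, hBmax⟩ := isCompact_univ.exists_isMaxOn Set.univ_nonempty hf.abs.continuousOn
  have hB' : ∀ p : X × X, |f p| ≤ |f q0| := fun p => hBmax (Set.mem_univ p)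
  set B := |f q0| with hBdef
  have hB0 : 0 ≤ B := abs_nonneg _
  -- μ.prod ν is a coupling
  have hmc : IsCoupling (μ.prod ν) μ ν := by
    constructor
    · rw [Measure.map_fst_prod]; simp
    · rw [Measure.map_snd_prod]; simp
  -- KL (μ.prod ν) (μ.prod ν) = 0
  have hKLmm : KL (μ.prod ν) (μ.prod ν) = 0 := by
    rw [KL, if_pos Measure.AbsolutelyContinuous.rfl]
    have h1 := Measure.rnDeriv_self (μ.prod ν)
    calc ∫⁻ x, ENNReal.ofReal
          (((μ.prod ν).rnDeriv (μ.prod ν) x).toReal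
            * Real.log ((μ.prod ν).rnDeriv (μ.prod ν) x).toReal
            - ((μ.prod ν).rnDeriv (μ.prod ν) x).toReal + 1) ∂(μ.prod ν)
        = ∫⁻ _, 0 ∂(μ.prod ν) := by
          refine lintegral_congr_ae (h1.mono fun x hx => ?_)
          simp [hx]
      _ = 0 := lintegral_zero
  -- lintegral of c against μ.prod ν
  have hcm : ∫⁻ p, ENNReal.ofReal (c p.1 p.2) ∂(μ.prod ν) ≤ ENNReal.ofReal C := by
    calc ∫⁻ p, ENNReal.ofReal (c p.1 p.2) ∂(μ.prod ν)
        ≤ ∫⁻ _, ENNReal.ofReal C ∂(μ.prod ν) :=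
          lintegral_mono fun p => ENNReal.ofReal_le_ofReal (hC' p)
      _ = ENNReal.ofReal C := by simp
  have hf_int : Integrable f (μ.prod ν) :=
    ⟨hf.aestronglyMeasurable,
      HasFiniteIntegral.of_bounded (C := B) (ae_of_all _ fun p => by
        rw [Real.norm_eq_abs]; exact hB' p)⟩
  -- key estimate
  have key : ∀ δ : ℝ, 0 < δ → ∀ ε : ℝ, 0 < ε →
      |(∫ p, f p ∂(π ε)) - ∫ p, f p ∂(μ.prod ν)| ≤ B * (δ + (9/δ + 4) * (C/ε)) := by
    intro δ hδ ε hε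
    obtain ⟨⟨hfst, hsnd⟩, hmin⟩ := hπ ε hε
    haveI hprob : IsProbabilityMeasure (π ε) := by
      have h1 : ((π ε).map Prod.fst) Set.univ = μ Set.univ := by rw [hfst]
      rw [Measure.map_apply measurable_fst MeasurableSet.univ, Set.preimage_univ] at h1
      exact ⟨by rw [h1, measure_univ]⟩
    have hmin' := hmin (μ.prod ν) hmc
    rw [regOTFunctional, regOTFunctional, hKLmm, mul_zero, add_zero] at hmin'
    have hεne : ENNReal.ofReal ε ≠ 0 := (ENNReal.ofReal_pos.2 hε).ne'
    have hKLb : ENNReal.ofReal ε * KL (π ε) (μ.prod ν) ≤ ENNReal.ofReal C :=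
      le_trans (le_trans le_add_self hmin') hcm
    have hKL2 : KL (π ε) (μ.prod ν) ≤ ENNReal.ofReal (C/ε) := by
      rw [ENNReal.ofReal_div_of_pos hε]
      rw [ENNReal.le_div_iff_mul_le (Or.inl hεne) (Or.inl ENNReal.ofReal_ne_top)]
      rwa [mul_comm]
    have hac : (π ε) ≪ μ.prod ν := by
      by_contra hnot
      rw [KL, if_neg hnot] at hKL2
      exact ENNReal.ofReal_ne_top (top_le_iff.mp hKL2)
    rw [KL, if_pos hac] at hKL2
    set g : X × X → ℝ := fun p => ((π ε).rnDeriv (μ.prod ν) p).toReal with hg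
    have hg0 : ∀ p, 0 ≤ g p := fun p => ENNReal.toReal_nonneg
    have hgm : Measurable g := (Measure.measurable_rnDeriv _ _).ennreal_toReal
    have hg_int : Integrable g (μ.prod ν) := Measure.integrable_toReal_rnDeriv
    set Φ : X × X → ℝ := fun p => g p * Real.log (g p) - g p + 1 with hΦ
    have hΦm : Measurable Φ :=
      ((hgm.mul (Real.measurable_log.comp hgm)).sub hgm).add measurable_const
    have hΦ0 : ∀ p, 0 ≤ Φ p := fun p => phi_nonneg' (hg0 p)
    have hΦint : Integrable Φ (μ.prod ν) := by
      refine ⟨hΦm.aestronglyMeasurable, ?_⟩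
      rw [hasFiniteIntegral_iff_ofReal (ae_of_all _ hΦ0)]
      exact lt_of_le_of_lt hKL2 ENNReal.ofReal_lt_top
    have hΦval : ∫ p, Φ p ∂(μ.prod ν) ≤ C/ε := by
      rw [integral_eq_lintegral_of_nonneg_ae (ae_of_all _ hΦ0) hΦm.aestronglyMeasurable]
      calc (∫⁻ p, ENNReal.ofReal (Φ p) ∂(μ.prod ν)).toReal
          ≤ (ENNReal.ofReal (C/ε)).toReal :=
            ENNReal.toReal_mono ENNReal.ofReal_ne_top hKL2
        _ = C/ε := ENNReal.toReal_ofReal (by positivity)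
    have hrepr : ∫ p, f p ∂(π ε) = ∫ p, g p * f p ∂(μ.prod ν) := by
      haveI : (π ε).HaveLebesgueDecomposition (μ.prod ν) :=
        Measure.haveLebesgueDecomposition_of_sigmaFinite _ _
      rw [← MeasureTheory.integral_rnDeriv_smul hac]
      simp only [smul_eq_mul]
      rfl
    have hgf_int : Integrable (fun p => g p * f p) (μ.prod ν) := by
      have := hg_int.bdd_mul hf.aestronglyMeasurable (ae_of_all _ fun p => by
        rw [Real.norm_eq_abs]; exact hB' p)
      simpa [mul_comm] using this
    have hsub_int : Integrable (fun p => g p - 1) (μ.prod ν) :=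
      hg_int.sub (integrable_const 1)
    have hprod_int : Integrable (fun p => (g p - 1) * f p) (μ.prod ν) := by
      have := hsub_int.bdd_mul hf.aestronglyMeasurable (ae_of_all _ fun p => by
        rw [Real.norm_eq_abs]; exact hB' p)
      simpa [mul_comm] using this
    have hdiff : (∫ p, f p ∂(π ε)) - ∫ p, f p ∂(μ.prod ν)
        = ∫ p, (g p - 1) * f p ∂(μ.prod ν) := by
      rw [hrepr, ← integral_sub hgf_int hf_int]
      congr 1; ext p; ring
    have habs1 : |∫ p, (g p - 1) * f p ∂(μ.prod ν)|
        ≤ B * ∫ p, |g p - 1| ∂(μ.prod ν) := by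
      calc |∫ p, (g p - 1) * f p ∂(μ.prod ν)|
          ≤ ∫ p, |(g p - 1) * f p| ∂(μ.prod ν) := by
            simpa only [Real.norm_eq_abs] using
              norm_integral_le_integral_norm (μ := μ.prod ν) fun p => (g p - 1) * f p
        _ ≤ ∫ p, B * |g p - 1| ∂(μ.prod ν) := by
            refine integral_mono hprod_int.abs ((hsub_int.abs).const_mul B) fun p => ?_
            rw [abs_mul, mul_comm]
            exact mul_le_mul_of_nonneg_right (hB' p) (abs_nonneg _)
        _ = B * ∫ p, |g p - 1| ∂(μ.prod ν) := integral_const_mul B _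
    have habs2 : ∫ p, |g p - 1| ∂(μ.prod ν) ≤ δ + (9/δ + 4) * (C/ε) := by
      have hK0 : (0:ℝ) ≤ 9/δ + 4 := by positivity
      calc ∫ p, |g p - 1| ∂(μ.prod ν)
          ≤ ∫ p, (δ + (9/δ + 4) * Φ p) ∂(μ.prod ν) := by
            refine integral_mono hsub_int.abs
              ((integrable_const δ).add (hΦint.const_mul _)) fun p => ?_
            exact abs_le_phi' hδ (hg0 p)
        _ = δ + (9/δ + 4) * ∫ p, Φ p ∂(μ.prod ν) := by
            rw [integral_add (integrable_const δ) (hΦint.const_mul _),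
              integral_const, integral_const_mul]
            simp
        _ ≤ δ + (9/δ + 4) * (C/ε) := by
            exact add_le_add (le_refl δ) (mul_le_mul_of_nonneg_left hΦval hK0)
    rw [hdiff]
    calc |∫ p, (g p - 1) * f p ∂(μ.prod ν)| ≤ B * ∫ p, |g p - 1| ∂(μ.prod ν) := habs1
      _ ≤ B * (δ + (9/δ + 4) * (C/ε)) := mul_le_mul_of_nonneg_left habs2 hB0
  -- conclude
  rw [Metric.tendsto_atTop]
  intro η hη
  set δ := η / (2*(B+1)) with hδdef
  have hδ : 0 < δ := by positivity
  set D := (B+1) * ((9/δ + 4) * C) with hDdef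
  have hD0 : 0 ≤ D := by
    apply mul_nonneg (by linarith)
    exact mul_nonneg (by positivity) hC0
  refine ⟨max 1 (2*D/η + 1), fun ε hε => ?_⟩
  have hε1 : (1:ℝ) ≤ ε := le_trans (le_max_left _ _) hε
  have hε0 : 0 < ε := lt_of_lt_of_le one_pos hε1
  have hεD : 2*D/η + 1 ≤ ε := le_trans (le_max_right _ _) hε
  rw [Real.dist_eq]
  have h1 := key δ hδ ε hε0
  have h2 : B * δ ≤ η/2 := by
    have : B * δ ≤ (B+1) * δ := by nlinarith
    have heq : (B+1) * δ = η/2 := by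
      rw [hδdef]; field_simp
    linarith
  have h3 : B * ((9/δ + 4) * (C/ε)) < η/2 := by
    have hb1 : B * ((9/δ + 4) * (C/ε)) ≤ (B+1) * ((9/δ + 4) * (C/ε)) := by
      have hz : (0:ℝ) ≤ (9/δ + 4) * (C/ε) :=
        mul_nonneg (by positivity) (div_nonneg hC0 hε0.le)
      nlinarith
    have hb2 : (B+1) * ((9/δ + 4) * (C/ε)) = D/ε := by
      rw [hDdef]; field_simp; try ring
    have hb3 : D/ε < η/2 := by
      have hlt : 2*D/η < ε := by linarith
      rw [div_lt_iff₀ hη] at hlt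
      rw [div_lt_iff₀ hε0]
      linarith
    linarith
  have h4 : B * (δ + (9/δ + 4) * (C/ε)) = B * δ + B * ((9/δ + 4) * (C/ε)) := by ring
  rw [h4] at h1
  linarith
end

section
/- Let X be a compact metric space, c : X×X → ℝ Lipschitz with constant L, μ a probability measure on X, ε > 0, and φ ∈ C(X). Then the softmin transform T_{μ,ε}(φ)(x) = −ε log ∫_X exp((φ(y) − c(x,y))/ε) dμ(y) is Lipschitz continuous in x with constant L. -/
open MeasureTheory Filter Topology
open scoped ENNReal NNReal

/-- The softmin transform `T_{μ,ε}(φ)(x) = -ε log ∫ exp((φ(y) - c(x,y))/ε) dμ(y)`. -/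
noncomputable def softmin {X : Type*} [MeasurableSpace X] (μ : Measure X) (ε : ℝ)
    (c : X → X → ℝ) (φ : X → ℝ) (x : X) : ℝ :=
  -ε * Real.log (∫ y, Real.exp ((φ y - c x y) / ε) ∂μ)

/-- The support of a measure: points all of whose neighborhoods have positive measure. -/
def msupport {X : Type*} [TopologicalSpace X] [MeasurableSpace X] (μ : Measure X) : Set X :=
  {x | ∀ U ∈ nhds x, μ U ≠ 0}

/-- If `c` is `L`-Lipschitz in its first argument, then `T_{μ,ε}(φ)` is `L`-Lipschitz. -/
theorem softmin_lipschitz {X : Type*} [MetricSpace X] [CompactSpace X]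
    [MeasurableSpace X] [BorelSpace X]
    (μ : Measure X) [IsProbabilityMeasure μ] (ε : ℝ) (hε : 0 < ε)
    (L : ℝ≥0) (c : X → X → ℝ) (hc : Continuous fun p : X × X => c p.1 p.2)
    (hcL : ∀ y, LipschitzWith L fun x => c x y)
    (φ : X → ℝ) (hφ : Continuous φ) :
    LipschitzWith L (softmin μ ε c φ) := by
  set I : X → ℝ := fun x => ∫ y, Real.exp ((φ y - c x y) / ε) ∂μ with hI
  have hcont : ∀ x, Continuous fun y => Real.exp ((φ y - c x y) / ε) := fun x =>
    (Real.continuous_exp.comp ((hφ.sub (hc.comp (Continuous.prodMk_right x))).div_const ε))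
  have hint : ∀ x, Integrable (fun y => Real.exp ((φ y - c x y) / ε)) μ :=
    fun x => (hcont x).integrable_of_hasCompactSupport (HasCompactSupport.of_compactSpace _)
  have hIpos : ∀ x, 0 < I x := fun x => integral_exp_pos (hint x)
  have key : ∀ x x', I x' ≤ Real.exp ((L : ℝ) * dist x x' / ε) * I x := by
    intro x x'
    have heq : Real.exp ((L : ℝ) * dist x x' / ε) * I x
        = ∫ y, Real.exp ((L : ℝ) * dist x x' / ε + (φ y - c x y) / ε) ∂μ := by
      rw [hI, ← integral_const_mul]
      congr 1; ext y; rw [← Real.exp_add]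
    rw [heq]
    refine integral_mono (hint x') ?_ ?_
    · have h2 : Integrable (fun y => Real.exp ((L : ℝ) * dist x x' / ε) *
          Real.exp ((φ y - c x y) / ε)) μ := (hint x).const_mul _
      simpa [← Real.exp_add] using h2
    · intro y
      apply Real.exp_le_exp.2
      rw [← add_div, div_le_div_iff_of_pos_right hε]
      have hd : c x y - c x' y ≤ (L : ℝ) * dist x x' := by
        have := (hcL y).dist_le_mul x x'
        rw [Real.dist_eq] at this
        calc c x y - c x' y ≤ |c x y - c x' y| := le_abs_self _
          _ ≤ (L : ℝ) * dist x x' := this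
      linarith
  have hlog : ∀ x x', Real.log (I x') - Real.log (I x) ≤ (L : ℝ) * dist x x' / ε := by
    intro x x'
    have h1 : Real.log (I x') ≤ (L : ℝ) * dist x x' / ε + Real.log (I x) := by
      calc Real.log (I x') ≤ Real.log (Real.exp ((L : ℝ) * dist x x' / ε) * I x) :=
            Real.log_le_log (hIpos x') (key x x')
        _ = (L : ℝ) * dist x x' / ε + Real.log (I x) := by
            rw [Real.log_mul (Real.exp_ne_zero _) (hIpos x).ne', Real.log_exp]
    linarith
  refine LipschitzWith.of_dist_le_mul fun x x' => ?_
  rw [Real.dist_eq]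
  have e1 := hlog x x'
  have e2 := hlog x' x
  rw [dist_comm x' x] at e2
  have habs : |softmin μ ε c φ x - softmin μ ε c φ x'| ≤ (L : ℝ) * dist x x' := by
    rw [abs_sub_le_iff]
    constructor
    · have : softmin μ ε c φ x - softmin μ ε c φ x'
          = ε * (Real.log (I x') - Real.log (I x)) := by
        simp only [softmin, hI]; ring
      rw [this]
      calc ε * (Real.log (I x') - Real.log (I x)) ≤ ε * ((L : ℝ) * dist x x' / ε) :=
            mul_le_mul_of_nonneg_left e1 hε.le
        _ = (L : ℝ) * dist x x' := by field_simp
    · have : softmin μ ε c φ x' - softmin μ ε c φ x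
          = ε * (Real.log (I x) - Real.log (I x')) := by
        simp only [softmin, hI]; ring
      rw [this]
      calc ε * (Real.log (I x) - Real.log (I x')) ≤ ε * ((L : ℝ) * dist x x' / ε) :=
            mul_le_mul_of_nonneg_left e2 hε.le
        _ = (L : ℝ) * dist x x' := by field_simp
  exact habs
end

section
/- Let c be L-Lipschitz on a compact metric space X with diameter diam(X), and μ a probability measure. Then T_{μ,ε} is a contraction on C(supp μ)/ℝ with the oscillation norm: ‖T_{μ,ε}(φ₁) − T_{μ,ε}(φ₂)‖_{◦,∞} ≤ (1 − exp(−2L·diam(X)/ε)) ‖φ₁ − φ₂‖_{◦,∞}. -/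
open MeasureTheory Filter Topology
open scoped ENNReal NNReal

noncomputable def oscNorm {X : Type*} (s : Set X) (f : X → ℝ) : ℝ :=
  (sSup (f '' s) - sInf (f '' s)) / 2

lemma msupport_compl_null {X : Type*} [TopologicalSpace X] [SecondCountableTopology X]
    [MeasurableSpace X] (μ : Measure X) : μ (msupport μ)ᶜ = 0 := by
  obtain ⟨T, hTc, hTsub, hTeq⟩ := TopologicalSpace.isOpen_sUnion_countable
    {V | IsOpen V ∧ μ V = 0} (fun V hV => hV.1)
  refine measure_mono_null ?_ ((measure_sUnion_null_iff hTc).2 fun V hV => (hTsub hV).2)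
  intro x hx
  simp only [Set.mem_compl_iff, msupport, Set.mem_setOf_eq, not_forall] at hx
  obtain ⟨U, hU, hU0⟩ := hx
  rw [not_ne_iff] at hU0
  have : x ∈ ⋃₀ {V | IsOpen V ∧ μ V = 0} :=
    ⟨interior U, ⟨isOpen_interior, measure_mono_null interior_subset hU0⟩,
      mem_interior_iff_mem_nhds.2 hU⟩
  rwa [← hTeq] at this

lemma msupport_nonempty {X : Type*} [TopologicalSpace X] [CompactSpace X] [MeasurableSpace X]
    (μ : Measure X) [IsProbabilityMeasure μ] : (msupport μ).Nonempty := by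
  by_contra h
  rw [Set.not_nonempty_iff_eq_empty] at h
  have hx : ∀ x : X, ∃ U ∈ nhds x, μ U = 0 := by
    intro x
    have : x ∉ msupport μ := by rw [h]; exact Set.notMem_empty x
    simp only [msupport, Set.mem_setOf_eq, not_forall] at this
    obtain ⟨U, hU, hU0⟩ := this
    exact ⟨U, hU, not_ne_iff.1 hU0⟩
  choose U hU hU0 using hx
  obtain ⟨t, ht⟩ := isCompact_univ.elim_nhds_subcover U (fun x _ => hU x)
  have : μ (Set.univ : Set X) = 0 :=
    measure_mono_null ht.2 ((measure_biUnion_null_iff t.countable_toSet).2 fun x _ => hU0 x)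
  simp [measure_univ] at this

lemma exp_ineq {θ s : ℝ} (hθ0 : 0 < θ) (hθ1 : θ ≤ 1) (hs : 0 ≤ s) :
    Real.exp s + θ ≤ (1 + θ * Real.exp s) * Real.exp ((1 - θ) * s) := by
  have hconv : Real.exp (θ * s) ≤ (1 - θ) + θ * Real.exp s := by
    have := convexOn_exp.2 (Set.mem_univ (0:ℝ)) (Set.mem_univ s) (by linarith : (0:ℝ) ≤ 1 - θ)
      hθ0.le (by ring)
    simpa [Real.exp_zero] using this
  have h2 : Real.exp ((θ - 1) * s) ≤ 1 :=
    Real.exp_le_one_iff.2 (mul_nonpos_of_nonpos_of_nonneg (by linarith) hs)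
  have key : Real.exp (θ * s) + θ * Real.exp ((θ - 1) * s) ≤ 1 + θ * Real.exp s := by
    nlinarith [hθ0.le]
  have hpos := Real.exp_pos ((1 - θ) * s)
  have e1 : Real.exp (θ * s) * Real.exp ((1 - θ) * s) = Real.exp s := by
    rw [← Real.exp_add]; ring_nf
  have e2 : Real.exp ((θ - 1) * s) * Real.exp ((1 - θ) * s) = 1 := by
    rw [← Real.exp_add]; ring_nf; exact Real.exp_zero
  nlinarith [mul_le_mul_of_nonneg_right key hpos.le]

lemma core_raw {θ A B N₁ N₂ N₁' N₂' : ℝ} (hθ0 : 0 < θ) (hθ1 : θ ≤ 1) (hA : 0 < A)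
    (hAB : A ≤ B)
    (hN₂ : 0 < N₂) (hN₂' : 0 < N₂')
    (hl : A * N₂' ≤ N₁') (hu : N₁' ≤ B * N₂')
    (h1 : N₁ * N₂' ≤ θ * (N₁' * N₂) + B * (N₂ * N₂') - B * (θ * (N₂' * N₂)))
    (h2 : N₁ * N₂' - A * (N₂ * N₂') - θ * (N₁' * N₂) + θ * A * (N₂' * N₂)
      ≤ (1/θ - θ) * (N₁' * N₂ - A * (N₂' * N₂))) :
    N₁ * N₂' * (A + θ * B) ≤ N₁' * N₂ * (B + θ * A) := by
  rcases le_total ((A + θ * B) * N₂') ((1 + θ) * N₁') with hc | hc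
  · have hBN : (0:ℝ) ≤ (1 - θ) * B * N₂ :=
      mul_nonneg (mul_nonneg (sub_nonneg.2 hθ1) (hA.le.trans hAB)) hN₂.le
    nlinarith [mul_le_mul_of_nonneg_right hc hBN, h1,
      mul_le_mul_of_nonneg_right h1 (add_pos hA (mul_pos hθ0 (hA.trans_le hAB))).le]
  · have h2' := mul_le_mul_of_nonneg_left h2 hθ0.le
    have hts : θ * (1/θ - θ) = 1 - θ^2 := by
      field_simp
    have hrw : θ * ((1/θ - θ) * (N₁' * N₂ - A * (N₂' * N₂)))
        = (1 - θ^2) * (N₁' * N₂ - A * (N₂' * N₂)) := by rw [← mul_assoc, hts]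
    rw [hrw] at h2'
    nlinarith [h2', mul_nonneg (mul_nonneg (mul_nonneg (sub_nonneg.2 hθ1) hA.le) hN₂.le)
      (sub_nonneg.2 hc)]

set_option maxHeartbeats 1000000 in
/-- If `c` is `L`-Lipschitz on the compact metric space `X`, then `T_{μ,ε}` is a contraction
with respect to the oscillation norm on `C(supp μ)/ℝ`:
`‖T_{μ,ε}(φ₁) - T_{μ,ε}(φ₂)‖_{◦,∞} ≤ (1 - exp(-2 L diam(X)/ε)) ‖φ₁ - φ₂‖_{◦,∞}`. -/
theorem softmin_contraction {X : Type*} [MetricSpace X] [CompactSpace X]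
    [MeasurableSpace X] [BorelSpace X]
    (μ : Measure X) [IsProbabilityMeasure μ] (ε : ℝ) (hε : 0 < ε)
    (L : ℝ≥0) (c : X → X → ℝ)
    (hc : LipschitzWith L fun p : X × X => c p.1 p.2)
    (φ₁ φ₂ : X → ℝ) (hφ₁ : Continuous φ₁) (hφ₂ : Continuous φ₂) :
    oscNorm Set.univ (fun x => softmin μ ε c φ₁ x - softmin μ ε c φ₂ x)
      ≤ (1 - Real.exp (-2 * L * Metric.diam (Set.univ : Set X) / ε))
        * oscNorm (msupport μ) (fun y => φ₁ y - φ₂ y) := by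
  classical
  obtain ⟨y₀, hy₀⟩ := msupport_nonempty μ
  have hXne : Nonempty X := ⟨y₀⟩
  set S := msupport μ with hSdef
  set Δ : X → ℝ := fun y => φ₁ y - φ₂ y with hΔdef
  set F : X → ℝ := fun x => softmin μ ε c φ₁ x - softmin μ ε c φ₂ x with hFdef
  have hΔc : Continuous Δ := hφ₁.sub hφ₂
  have hcomp : IsCompact (Δ '' (Set.univ : Set X)) := isCompact_univ.image hΔc
  have hbddA : BddAbove (Δ '' S) :=
    hcomp.bddAbove.mono (Set.image_mono (Set.subset_univ S))
  have hbddB : BddBelow (Δ '' S) :=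
    hcomp.bddBelow.mono (Set.image_mono (Set.subset_univ S))
  have hSne : (Δ '' S).Nonempty := ⟨Δ y₀, Set.mem_image_of_mem _ hy₀⟩
  set a := sInf (Δ '' S) with hadef
  set b := sSup (Δ '' S) with hbdef
  have hab : a ≤ b := csInf_le_csSup hSne hbddB hbddA
  have hmema : ∀ y ∈ S, a ≤ Δ y := fun y hy => csInf_le hbddB (Set.mem_image_of_mem _ hy)
  have hmemb : ∀ y ∈ S, Δ y ≤ b := fun y hy => le_csSup hbddA (Set.mem_image_of_mem _ hy)
  have haeS : ∀ᵐ y ∂μ, y ∈ S := by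
    rw [ae_iff]
    exact msupport_compl_null μ
  set D := Metric.diam (Set.univ : Set X) with hDdef
  have hD0 : 0 ≤ D := Metric.diam_nonneg
  have hLD : 0 ≤ (L:ℝ) * D := mul_nonneg L.coe_nonneg hD0
  set θ' : ℝ := Real.exp (-((L:ℝ) * D) / ε) with hθ'def
  set θ : ℝ := Real.exp (-2 * (L:ℝ) * D / ε) with hθdef
  have hθ'pos : 0 < θ' := Real.exp_pos _
  have hθ0 : 0 < θ := Real.exp_pos _
  have hθθ' : θ = θ' * θ' := by
    rw [hθdef, hθ'def, ← Real.exp_add]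
    congr 1
    ring
  have hθ1 : θ ≤ 1 := by
    rw [hθdef]
    apply Real.exp_le_one_iff.2
    apply div_nonpos_of_nonpos_of_nonneg _ hε.le
    nlinarith
  set A : ℝ := Real.exp (a / ε) with hAdef
  set B : ℝ := Real.exp (b / ε) with hBdef
  have hA : 0 < A := Real.exp_pos _
  have hB : 0 < B := Real.exp_pos _
  have hAB : A ≤ B := by
    rw [hAdef, hBdef]
    exact Real.exp_le_exp.2 (div_le_div_of_nonneg_right hab hε.le)
  have hcontc : ∀ z : X, Continuous fun y => c z y := fun z =>
    hc.continuous.comp (continuous_const.prodMk continuous_id)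
  have hinteg : ∀ (φ : X → ℝ), Continuous φ → ∀ z : X,
      Integrable (fun y => Real.exp ((φ y - c z y) / ε)) μ := fun φ hφ z =>
    (Real.continuous_exp.comp ((hφ.sub (hcontc z)).div_const ε)).integrable_of_hasCompactSupport
      (HasCompactSupport.of_compactSpace _)
  have hintpos : ∀ (φ : X → ℝ), Continuous φ → ∀ z : X,
      0 < ∫ y, Real.exp ((φ y - c z y) / ε) ∂μ := by
    intro φ hφ z
    rw [integral_pos_iff_support_of_nonneg (fun y => (Real.exp_pos _).le) (hinteg φ hφ z)]
    simp [Function.support, (Real.exp_pos _).ne']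
  -- the key pairwise estimate
  have key : ∀ x x' : X, F x' - F x ≤ (1 - θ) * (b - a) := by
    intro x x'
    set p₁ : X → ℝ := fun y => Real.exp ((φ₁ y - c x y) / ε) with hp₁
    set p₂ : X → ℝ := fun y => Real.exp ((φ₂ y - c x y) / ε) with hp₂
    set q₁ : X → ℝ := fun y => Real.exp ((φ₁ y - c x' y) / ε) with hq₁
    set q₂ : X → ℝ := fun y => Real.exp ((φ₂ y - c x' y) / ε) with hq₂
    have hip₁ : Integrable p₁ μ := hinteg φ₁ hφ₁ x
    have hip₂ : Integrable p₂ μ := hinteg φ₂ hφ₂ x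
    have hiq₁ : Integrable q₁ μ := hinteg φ₁ hφ₁ x'
    have hiq₂ : Integrable q₂ μ := hinteg φ₂ hφ₂ x'
    set N₁ : ℝ := ∫ y, p₁ y ∂μ with hN₁def
    set N₂ : ℝ := ∫ y, p₂ y ∂μ with hN₂def
    set N₁' : ℝ := ∫ y, q₁ y ∂μ with hN₁'def
    set N₂' : ℝ := ∫ y, q₂ y ∂μ with hN₂'def
    have hN₁ : 0 < N₁ := by rw [hN₁def]; exact hintpos φ₁ hφ₁ x
    have hN₂ : 0 < N₂ := by rw [hN₂def]; exact hintpos φ₂ hφ₂ x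
    have hN₁' : 0 < N₁' := by rw [hN₁'def]; exact hintpos φ₁ hφ₁ x'
    have hN₂' : 0 < N₂' := by rw [hN₂'def]; exact hintpos φ₂ hφ₂ x'
    -- Lipschitz bound on the cost difference
    have hcd : ∀ y : X, |c x y - c x' y| ≤ (L:ℝ) * D := by
      intro y
      have h1 := hc.dist_le_mul (x, y) (x', y)
      have h2 : dist ((x, y) : X × X) (x', y) = dist x x' := by
        rw [Prod.dist_eq]
        simp [max_eq_left dist_nonneg]
      have h3 : dist x x' ≤ D := by
        rw [hDdef]
        exact Metric.dist_le_diam_of_mem isCompact_univ.isBounded trivial trivial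
      rw [h2] at h1
      rw [← Real.dist_eq]
      calc dist (c x y) (c x' y) ≤ (L:ℝ) * dist x x' := h1
        _ ≤ (L:ℝ) * D := by nlinarith [L.coe_nonneg, dist_nonneg (x := x) (y := x')]
    -- pointwise comparisons between kernels
    have hpq : ∀ y : X, θ' * q₂ y ≤ p₂ y ∧ θ' * p₂ y ≤ q₂ y := by
      intro y
      have habs := abs_le.1 (hcd y)
      constructor
      · simp only [hθ'def, hp₂, hq₂]
        rw [← Real.exp_add]
        apply Real.exp_le_exp.2
        rw [← add_div]
        apply div_le_div_of_nonneg_right _ hε.le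
        linarith [habs.2]
      · simp only [hθ'def, hp₂, hq₂]
        rw [← Real.exp_add]
        apply Real.exp_le_exp.2
        rw [← add_div]
        apply div_le_div_of_nonneg_right _ hε.le
        linarith [habs.1]
    -- integrated comparisons
    have hNq : θ' * N₂ ≤ N₂' := by
      have h := integral_mono (μ := μ) (hip₂.const_mul θ') hiq₂ fun y => (hpq y).2
      rwa [integral_const_mul] at h
    have hNp : θ' * N₂' ≤ N₂ := by
      have h := integral_mono (μ := μ) (hiq₂.const_mul θ') hip₂ fun y => (hpq y).1
      rwa [integral_const_mul] at h
    -- identities p₁ = E * p₂, q₁ = E * q₂ with E = exp(Δ y / ε)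
    have hEp : ∀ y : X, p₁ y = Real.exp (Δ y / ε) * p₂ y := by
      intro y
      simp only [hp₁, hp₂, hΔdef]
      rw [← Real.exp_add]
      congr 1
      ring
    have hEq : ∀ y : X, q₁ y = Real.exp (Δ y / ε) * q₂ y := by
      intro y
      simp only [hq₁, hq₂, hΔdef]
      rw [← Real.exp_add]
      congr 1
      ring
    have hEbnd : ∀ y ∈ S, A ≤ Real.exp (Δ y / ε) ∧ Real.exp (Δ y / ε) ≤ B := by
      intro y hy
      constructor
      · rw [hAdef]
        exact Real.exp_le_exp.2 (div_le_div_of_nonneg_right (hmema y hy) hε.le)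
      · rw [hBdef]
        exact Real.exp_le_exp.2 (div_le_div_of_nonneg_right (hmemb y hy) hε.le)
    -- w := p₂ y * N₂' - θ * (q₂ y * N₂) is nonneg, and bounded by (1/θ - θ) q₂ N₂
    have hwpos : ∀ y : X, 0 ≤ p₂ y * N₂' - θ * (q₂ y * N₂) := by
      intro y
      have hq2pos : 0 < q₂ y := Real.exp_pos _
      have hp2pos : 0 < p₂ y := Real.exp_pos _
      have h1 : (θ' * q₂ y) * (θ' * N₂) ≤ p₂ y * N₂' :=
        mul_le_mul (hpq y).1 hNq (by positivity) (by positivity)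
      rw [hθθ']
      nlinarith [h1]
    have hwle : ∀ y : X, p₂ y * N₂' - θ * (q₂ y * N₂) ≤ (1/θ - θ) * (q₂ y * N₂) := by
      intro y
      have hq2pos : 0 < q₂ y := Real.exp_pos _
      have hp2pos : 0 < p₂ y := Real.exp_pos _
      have h1 : (θ' * p₂ y) * (θ' * N₂') ≤ q₂ y * N₂ :=
        mul_le_mul (hpq y).2 hNp (by positivity) (by positivity)
      have h2 : p₂ y * N₂' ≤ (1/θ) * (q₂ y * N₂) := by
        rw [← sub_nonneg]
        have hθne : θ ≠ 0 := hθ0.ne'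
        have heq : (1/θ) * (q₂ y * N₂) - p₂ y * N₂'
            = (1/θ) * ((q₂ y * N₂) - (θ' * p₂ y) * (θ' * N₂')) := by
          rw [hθθ']
          field_simp
        rw [heq]
        have := sub_nonneg.2 h1
        positivity
      linarith
    -- bounds on N₁' relative to N₂'
    have hNl : A * N₂' ≤ N₁' := by
      have h := integral_mono_ae (μ := μ) (hiq₂.const_mul A) hiq₁ ?_
      · rwa [integral_const_mul] at h
      · filter_upwards [haeS] with y hy
        rw [hEq y]
        exact mul_le_mul_of_nonneg_right (hEbnd y hy).1 (Real.exp_pos _).le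
    have hNu : N₁' ≤ B * N₂' := by
      have h := integral_mono_ae (μ := μ) hiq₁ (hiq₂.const_mul B) ?_
      · rwa [integral_const_mul] at h
      · filter_upwards [haeS] with y hy
        rw [hEq y]
        exact mul_le_mul_of_nonneg_right (hEbnd y hy).2 (Real.exp_pos _).le
    -- linear combinations of integrals
    have hcomb : ∀ α β γ δ : ℝ,
        Integrable (fun y => α * p₁ y + (β * p₂ y + (γ * q₁ y + δ * q₂ y))) μ :=
      fun α β γ δ => (hip₁.const_mul α).add
        ((hip₂.const_mul β).add ((hiq₁.const_mul γ).add (hiq₂.const_mul δ)))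
    have lin : ∀ α β γ δ : ℝ,
        ∫ y, (α * p₁ y + (β * p₂ y + (γ * q₁ y + δ * q₂ y))) ∂μ
          = α * N₁ + (β * N₂ + (γ * N₁' + δ * N₂')) := by
      intro α β γ δ
      have i3 : Integrable (fun y => γ * q₁ y + δ * q₂ y) μ :=
        (hiq₁.const_mul γ).add (hiq₂.const_mul δ)
      have i2 : Integrable (fun y => β * p₂ y + (γ * q₁ y + δ * q₂ y)) μ :=
        (hip₂.const_mul β).add i3
      rw [hN₁def, hN₂def, hN₁'def, hN₂'def,
        integral_add (hip₁.const_mul α) i2,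
        integral_add (hip₂.const_mul β) i3,
        integral_add (hiq₁.const_mul γ) (hiq₂.const_mul δ),
        integral_const_mul, integral_const_mul, integral_const_mul, integral_const_mul]
    -- first integral inequality
    have h1 : N₁ * N₂' ≤ θ * (N₁' * N₂) + B * (N₂ * N₂') - B * (θ * (N₂' * N₂)) := by
      have hmono : ∫ y, (N₂' * p₁ y + ((0:ℝ) * p₂ y + ((0:ℝ) * q₁ y + (0:ℝ) * q₂ y))) ∂μ
          ≤ ∫ y, ((0:ℝ) * p₁ y + ((B * N₂') * p₂ y
            + ((θ * N₂) * q₁ y + (-(B * (θ * N₂))) * q₂ y))) ∂μ := by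
        apply integral_mono_ae (hcomb N₂' 0 0 0) (hcomb 0 (B * N₂') (θ * N₂) (-(B * (θ * N₂))))
        filter_upwards [haeS] with y hy
        have hEB := (hEbnd y hy).2
        have hmul := mul_le_mul_of_nonneg_right hEB (hwpos y)
        rw [hEp y, hEq y]
        nlinarith [hmul]
      rw [lin, lin] at hmono
      nlinarith [hmono]
    -- second integral inequality
    have h2 : N₁ * N₂' - A * (N₂ * N₂') - θ * (N₁' * N₂) + θ * A * (N₂' * N₂)
        ≤ (1/θ - θ) * (N₁' * N₂ - A * (N₂' * N₂)) := by
      have hmono : ∫ y, (N₂' * p₁ y + ((-(A * N₂')) * p₂ y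
            + ((-(θ * N₂)) * q₁ y + (θ * A * N₂) * q₂ y))) ∂μ
          ≤ ∫ y, ((0:ℝ) * p₁ y + ((0:ℝ) * p₂ y
            + (((1/θ - θ) * N₂) * q₁ y + (-((1/θ - θ) * (A * N₂))) * q₂ y))) ∂μ := by
        apply integral_mono_ae (hcomb N₂' (-(A * N₂')) (-(θ * N₂)) (θ * A * N₂))
          (hcomb 0 0 ((1/θ - θ) * N₂) (-((1/θ - θ) * (A * N₂))))
        filter_upwards [haeS] with y hy
        have hEA := (hEbnd y hy).1
        have hmul := mul_le_mul_of_nonneg_left (hwle y) (sub_nonneg.2 hEA)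
        rw [hEp y, hEq y]
        nlinarith [hmul]
      rw [lin, lin] at hmono
      nlinarith [hmono]
    have hfinal := core_raw hθ0 hθ1 hA hAB hN₂ hN₂' hNl hNu h1 h2
    -- convert to the oscillation bound
    have hs : 0 ≤ (b - a) / ε := div_nonneg (by linarith) hε.le
    have hexp := exp_ineq hθ0 hθ1 hs
    have hBs : B = A * Real.exp ((b - a) / ε) := by
      rw [hAdef, hBdef, ← Real.exp_add]
      congr 1
      field_simp
      ring
    have hBA : B + θ * A ≤ (A + θ * B) * Real.exp ((1 - θ) * ((b - a) / ε)) := by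
      nlinarith [mul_le_mul_of_nonneg_left hexp hA.le, hBs,
        Real.exp_pos ((1 - θ) * ((b - a) / ε)), Real.exp_pos ((b - a) / ε)]
    have hNN : N₁ * N₂' ≤ N₁' * N₂ * Real.exp ((1 - θ) * ((b - a) / ε)) := by
      have hApos : 0 < A + θ * B := by positivity
      have h2' : N₁' * N₂ * (B + θ * A)
          ≤ N₁' * N₂ * Real.exp ((1 - θ) * ((b - a) / ε)) * (A + θ * B) := by
        nlinarith [mul_le_mul_of_nonneg_left hBA (mul_pos hN₁' hN₂).le]
      exact le_of_mul_le_mul_right (hfinal.trans h2') hApos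
    have hlog : Real.log (N₁ * N₂') - Real.log (N₁' * N₂) ≤ (1 - θ) * ((b - a) / ε) := by
      have h := Real.log_le_log (mul_pos hN₁ hN₂') hNN
      rw [Real.log_mul (mul_pos hN₁' hN₂).ne' (Real.exp_pos _).ne', Real.log_exp] at h
      linarith
    have hFeq : F x' - F x = ε * (Real.log (N₁ * N₂') - Real.log (N₁' * N₂)) := by
      have e₁ : F x = -ε * Real.log N₁ - -ε * Real.log N₂ := rfl
      have e₂ : F x' = -ε * Real.log N₁' - -ε * Real.log N₂' := rfl
      rw [e₁, e₂, Real.log_mul hN₁.ne' hN₂'.ne', Real.log_mul hN₁'.ne' hN₂.ne']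
      ring
    calc F x' - F x = ε * (Real.log (N₁ * N₂') - Real.log (N₁' * N₂)) := hFeq
      _ ≤ ε * ((1 - θ) * ((b - a) / ε)) := mul_le_mul_of_nonneg_left hlog hε.le
      _ = (1 - θ) * (b - a) := by field_simp
  -- assemble the oscillation bound
  have himg : (F '' Set.univ).Nonempty := ⟨F y₀, Set.mem_image_of_mem _ (Set.mem_univ _)⟩
  have hinf : ∀ x : X, F x - (1 - θ) * (b - a) ≤ sInf (F '' Set.univ) := by
    intro x
    apply le_csInf himg
    rintro z ⟨x', -, rfl⟩
    linarith [key x' x]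
  have hsup : sSup (F '' Set.univ) ≤ sInf (F '' Set.univ) + (1 - θ) * (b - a) := by
    apply csSup_le himg
    rintro z ⟨x, -, rfl⟩
    linarith [hinf x]
  show oscNorm Set.univ F ≤ (1 - θ) * oscNorm S Δ
  rw [oscNorm, oscNorm, ← hadef, ← hbdef]
  linarith [hsup]
end
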